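/- arXiv:1610.09422 — 7 statements merged into one kernel-verified Lean document; each statement's English description precedes it below -/
import Mathlib

section
/- Let d > m > 1 be integers and let g(z) = z^d + t·z^(m-1) + Σ_{i=2}^{m} (α_i t + β_i) z^(m-i) be a polynomial with coefficients in ℂ(t), where α_2 ≠ 0. Then g is not conjugate over the algebraic closure of ℂ(t) by any linear polynomial to z^d. -/
/-!
If `μ⁻¹ ∘ g ∘ μ = z ^ d` for `μ = a z + b`, then `g = c (z - b) ^ d + b` with `c = a ^ (1 - d)`.
Since `g` is monic with vanishing `z ^ (d - 1)`-coefficient, comparing the two top coefficients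
forces `c = 1` and `d b = 0`, so `g = z ^ d`; but `g` has the nonzero coefficient `t` in degree
`m - 1 ≥ 1`.
-/

open Polynomial

/-- The element `t` in the algebraic closure of `ℂ(t)`. -/
noncomputable def tK : AlgebraicClosure (RatFunc ℂ) :=
  algebraMap (RatFunc ℂ) (AlgebraicClosure (RatFunc ℂ)) RatFunc.X

/-- The embedding of `ℂ` into the algebraic closure of `ℂ(t)`. -/
noncomputable def cK : ℂ →+* AlgebraicClosure (RatFunc ℂ) :=
  (algebraMap (RatFunc ℂ) (AlgebraicClosure (RatFunc ℂ))).comp (algebraMap ℂ (RatFunc ℂ))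

section AffineConjugacy

variable {K : Type*} [Field K]

theorem affine_comp_affine_inv {a : K} (ha : a ≠ 0) (b : K) :
    (C a * X + C b).comp (C a⁻¹ * (X - C b)) = X := by
  simp only [add_comp, mul_comp, C_comp, X_comp, ← mul_assoc, ← C_mul, mul_inv_cancel₀ ha,
    C_1, one_mul, sub_add_cancel]

theorem eq_affine_conj_of_comp_eq {a b : K} (ha : a ≠ 0) {g p : K[X]}
    (h : g.comp (C a * X + C b) = (C a * X + C b).comp p) :
    g = (C a * X + C b).comp (p.comp (C a⁻¹ * (X - C b))) :=
  calc g = g.comp ((C a * X + C b).comp (C a⁻¹ * (X - C b))) := by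
        rw [affine_comp_affine_inv ha, comp_X]
    _ = _ := by rw [← comp_assoc, h, comp_assoc]

theorem eq_X_pow_of_comp_affine_eq {a b : K} (ha : a ≠ 0) {d : ℕ} (hd : 1 < d)
    (hdK : (d : K) ≠ 0) {g : K[X]} (h : g.comp (C a * X + C b) = (C a * X + C b).comp (X ^ d))
    (hg_top : g.coeff d = 1) (hg_sub : g.coeff (d - 1) = 0) : g = X ^ d := by
  set c := a * a⁻¹ ^ d
  have hg : g = C c * (X + C (-b)) ^ d + C b := by
    rw [eq_affine_conj_of_comp_eq ha h, pow_comp, X_comp, mul_pow, ← C_pow, C_mul, map_neg]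
    simp only [add_comp, mul_comp, C_comp, X_comp, ← mul_assoc, sub_eq_add_neg]
  have hcoeff (k : ℕ) :
      g.coeff k = c * ((-b) ^ (d - k) * d.choose k) + if k = 0 then b else 0 := by
    rw [hg, coeff_add, coeff_C_mul, coeff_X_add_C_pow, coeff_C]
  have hc : c = 1 := by
    rw [hcoeff, Nat.sub_self, if_neg (by omega)] at hg_top
    simpa using hg_top
  have hb : b = 0 := by
    rw [hcoeff, hc, if_neg (by omega), Nat.sub_sub_self (by omega), Nat.choose_symm (by omega),
      Nat.choose_one_right] at hg_sub
    simpa [hdK] using hg_sub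
  rw [hg, hc, hb]
  simp

end AffineConjugacy

theorem coeff_sum_Icc_two_C_mul_X_pow_sub {R : Type*} [Semiring R] (f : ℕ → R) {m k : ℕ}
    (hk : m - 1 ≤ k) : (∑ i ∈ Finset.Icc 2 m, C (f i) * X ^ (m - i)).coeff k = 0 := by
  rw [finsetSum_coeff]
  refine Finset.sum_eq_zero fun i hi => ?_
  rw [Finset.mem_Icc] at hi
  rw [coeff_C_mul_X_pow, if_neg (by omega)]

theorem stmt1_general (d m : ℕ) (hm : 1 < m) (hd : m < d) (α β : ℕ → ℂ)
    (g : Polynomial (AlgebraicClosure (RatFunc ℂ)))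
    (hg : g = X ^ d + C tK * X ^ (m - 1) +
      ∑ i ∈ Finset.Icc 2 m, C (cK (α i) * tK + cK (β i)) * X ^ (m - i)) :
    ¬ ∃ a b : AlgebraicClosure (RatFunc ℂ), a ≠ 0 ∧
      g.comp (C a * X + C b) = (C a * X + C b).comp (X ^ d) := by
  rintro ⟨a, b, ha, h⟩
  have hcoeff {k : ℕ} (hk : m - 1 ≤ k) :
      g.coeff k = (if k = d then 1 else 0) + if k = m - 1 then tK else 0 := by
    rw [hg, coeff_add, coeff_add, coeff_sum_Icc_two_C_mul_X_pow_sub _ hk, coeff_X_pow,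
      coeff_C_mul_X_pow, add_zero]
  have hgX : g = X ^ d :=
    eq_X_pow_of_comp_affine_eq ha (by omega) (by norm_cast; omega) h
      (by rw [hcoeff (by omega), if_pos rfl, if_neg (by omega), add_zero])
      (by rw [hcoeff (by omega), if_neg (by omega), if_neg (by omega), add_zero])
  have htK : tK = 0 := by
    simpa [hgX, coeff_X_pow, (by omega : m - 1 ≠ d)] using hcoeff le_rfl
  exact (by simp [tK, RatFunc.X_ne_zero] : tK ≠ 0) htK

theorem stmt1 (d m : ℕ) (hm : 1 < m) (hd : m < d) (α β : ℕ → ℂ) (hα : α 2 ≠ 0)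
    (g : Polynomial (AlgebraicClosure (RatFunc ℂ)))
    (hg : g = X ^ d + C tK * X ^ (m - 1) +
      ∑ i ∈ Finset.Icc 2 m, C (cK (α i) * tK + cK (β i)) * X ^ (m - i)) :
    ¬ ∃ a b : AlgebraicClosure (RatFunc ℂ), a ≠ 0 ∧
      g.comp (C a * X + C b) = (C a * X + C b).comp (X ^ d) :=
  stmt1_general d m hm hd α β g hg
end

section
/- Let d > m > 1 be integers and g(z) = z^d + t·z^(m-1) + Σ_{i=2}^m (α_i t + β_i) z^(m-i) with α_i, β_i ∈ ℂ and α_2 ≠ 0, viewed over K = algebraic closure of ℂ(t). If a linear polynomial μ(z) = az + b over K satisfies μ ∘ g^n = g^n ∘ μ for some positive integer n, then μ is the identity (a = 1, b = 0). -/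
/-!
Write `g = X ^ d + h` with `deg h = m - 1`. Since `g^[n+1] = g^[n] ∘ g` and `(X ^ d + h) ^ D`
agrees with `X ^ (d * D) + D • X ^ (d * (D - 1)) * h` in all degrees above
`d * D - 2 * (d - m + 1)`, induction shows that
`g^[n] = X ^ D + (terms of degree ≤ D - d + m - 1)` with `D = d ^ n`, and that the coefficients
in degrees `D - d + m - 1` and `D - d + m - 2` are `d ^ (n - 1) • t` and
`d ^ (n - 1) • (α₂ t + β₂)`, both nonzero. Comparing the coefficients of `X ^ (D - 1)` in
`μ ∘ g^[n] = g^[n] ∘ μ` gives `D a ^ (D - 1) b = 0`, so `b = 0`; then comparing the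
coefficients of `X ^ j` gives `a ^ j = a` wherever `g^[n]` has a nonzero coefficient, and two
consecutive such `j` force `a = 1`.
-/

open Polynomial

/-- `polyIter p n` is the `n`-fold composition `p ∘ p ∘ ⋯ ∘ p`. -/
noncomputable def polyIter {R : Type*} [CommSemiring R] (p : Polynomial R) : ℕ → Polynomial R
  | 0 => X
  | n + 1 => p.comp (polyIter p n)

namespace Polynomial

variable {R : Type*}

theorem coeff_comp_C_mul_X [CommSemiring R] (p : R[X]) (a : R) (j : ℕ) :
    (p.comp (C a * X)).coeff j = p.coeff j * a ^ j := by
  induction p using Polynomial.induction_on' with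
  | add p q hp hq => simp only [add_comp, coeff_add, hp, hq, add_mul]
  | monomial k c =>
    rw [monomial_comp, mul_pow, ← C_pow, ← mul_assoc, ← C_mul, coeff_C_mul_X_pow,
      coeff_monomial]
    split_ifs <;> simp_all

theorem coeff_C_mul_X_add_C_pow [CommSemiring R] (a b : R) (N j : ℕ) :
    ((C a * X + C b) ^ N).coeff j = N.choose j * a ^ j * b ^ (N - j) := by
  have : (C a * X + C b) ^ N = ((X + C b) ^ N).comp (C a * X) := by
    simp only [pow_comp, add_comp, X_comp, C_comp]
  rw [this, coeff_comp_C_mul_X, coeff_X_add_C_pow]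
  ring

theorem natDegree_X_pow_add_pow_sub_le [CommRing R] {e : ℕ} {h : R[X]} (hh : h.natDegree ≤ e)
    (N : ℕ) : ((X ^ e + h) ^ N - X ^ (e * N)).natDegree ≤ e * (N - 1) + h.natDegree := by
  have hdeg : (X ^ e + h).natDegree ≤ e :=
    (natDegree_add_le _ _).trans (max_le (natDegree_X_pow_le e) hh)
  have hsum : (∑ i ∈ Finset.range N, (X ^ e + h) ^ i * (X ^ e) ^ (N - 1 - i)).natDegree
      ≤ e * (N - 1) := by
    refine natDegree_sum_le_of_forall_le _ _ fun i hi => ?_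
    have hi : i < N := Finset.mem_range.mp hi
    calc ((X ^ e + h) ^ i * (X ^ e) ^ (N - 1 - i)).natDegree
        ≤ i * e + (N - 1 - i) * e :=
          natDegree_mul_le.trans (add_le_add (natDegree_pow_le_of_le i hdeg)
            (natDegree_pow_le_of_le _ (natDegree_X_pow_le e)))
      _ = e * (N - 1) := by rw [← add_mul, mul_comm]; congr 1; omega
  rw [pow_mul, ← geom_sum₂_mul, add_sub_cancel_left]
  exact natDegree_mul_le.trans (by omega)

theorem coeff_X_pow_add_pow_succ [CommSemiring R] {e i : ℕ} {h : R[X]} (hi : i < e)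
    (hh : 2 * h.natDegree < e + i) (N : ℕ) :
    ((X ^ e + h) ^ (N + 1)).coeff (e * N + i) = (N + 1) * h.coeff i := by
  -- only the term `(N + 1) • X ^ (e * N) * h` of the binomial expansion reaches this degree
  rw [add_pow, finsetSum_coeff, Finset.sum_eq_single N]
  · rw [← pow_mul, add_tsub_cancel_left, pow_one, Nat.choose_succ_self_right, coeff_mul_natCast,
      add_comm, coeff_X_pow_mul, Nat.cast_succ, mul_comm]
  · intro k hk hkN
    rw [coeff_mul_natCast]
    convert zero_mul _
    rcases Nat.lt_or_gt_of_ne hkN with hk' | hk'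
    · obtain ⟨j, rfl⟩ : ∃ j, N = k + j + 1 := ⟨N - k - 1, by omega⟩
      rw [show k + j + 1 + 1 - k = j + 2 by omega]
      apply coeff_eq_zero_of_natDegree_lt
      calc ((X ^ e) ^ k * h ^ (j + 2)).natDegree
          ≤ e * k + (j + 2) * h.natDegree := by
            rw [← pow_mul]
            exact natDegree_mul_le.trans (add_le_add (natDegree_X_pow_le _) natDegree_pow_le)
        _ < e * (k + j + 1) + i := by nlinarith
    · obtain rfl : k = N + 1 := by rw [Finset.mem_range] at hk; omega
      rw [Nat.sub_self, pow_zero, mul_one, ← pow_mul, coeff_X_pow,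
        if_neg (by rw [mul_add_one]; omega)]
  · intro h; simp at h

end Polynomial

section Iterates

variable {R : Type*}

theorem polyIter_succ' [CommSemiring R] (p : R[X]) (n : ℕ) :
    polyIter p (n + 1) = (polyIter p n).comp p := by
  induction n with
  | zero => simp [polyIter]
  | succ n ih => conv_lhs => rw [polyIter, ih, ← comp_assoc, ← polyIter]

theorem polyIter_succ_eq_pow_add_comp [CommRing R] (p : R[X]) (n e : ℕ) :
    polyIter p (n + 1) = p ^ e + (polyIter p n - X ^ e).comp p := by
  rw [polyIter_succ', sub_comp, X_pow_comp, add_sub_cancel]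

variable [CommRing R] {d k : ℕ} {h : R[X]}

theorem natDegree_polyIter_succ_sub_le (hk : k < d) (hh : h.natDegree ≤ k) (n : ℕ) :
    (polyIter (X ^ d + h) (n + 1) - X ^ d ^ (n + 1)).natDegree ≤ d ^ (n + 1) - d + k := by
  induction n with
  | zero => simpa [polyIter] using hh
  | succ n ih =>
    have hdD : d ≤ d ^ (n + 1) := Nat.le_self_pow (Nat.succ_ne_zero n) d
    rw [polyIter_succ_eq_pow_add_comp _ _ (d ^ (n + 1)), pow_succ' d (n + 1), add_sub_right_comm]
    generalize d ^ (n + 1) = D at *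
    have hg : (X ^ d + h).natDegree ≤ d :=
      natDegree_add_le_of_degree_le (natDegree_X_pow_le d) (hh.trans hk.le)
    have hcomp := natDegree_comp_le.trans (Nat.mul_le_mul ih hg)
    have hpow := natDegree_X_pow_add_pow_sub_le (hh.trans hk.le) D
    have hgap : (D - d + k) * d + d ≤ d * D := by
      have := Nat.mul_le_mul_right d (show D - d + k + 1 ≤ D by omega)
      rwa [add_one_mul, mul_comm D] at this
    refine (natDegree_add_le _ _).trans (max_le (hpow.trans ?_) (hcomp.trans ?_))
    · rw [Nat.mul_sub_one]
      omega
    · omega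

theorem coeff_polyIter_succ (hk : k + 1 < d) (hh : h.natDegree ≤ k) {i : ℕ} (hki : k ≤ i + 1)
    (hid : i < d) (n : ℕ) :
    (polyIter (X ^ d + h) (n + 1)).coeff (d ^ (n + 1) - d + i) = d ^ n * h.coeff i := by
  cases n with
  | zero => simp [polyIter, coeff_X_pow, hid.ne]
  | succ n =>
    have hdeg := natDegree_polyIter_succ_sub_le (d := d) (by omega) hh n
    have hdD : d ≤ d ^ (n + 1) := Nat.le_self_pow (Nat.succ_ne_zero n) d
    rw [polyIter_succ_eq_pow_add_comp _ _ (d ^ (n + 1)), coeff_add, pow_succ' d (n + 1),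
      ← Nat.cast_pow]
    generalize d ^ (n + 1) = D at *
    obtain ⟨N, rfl⟩ : ∃ N, D = N + 1 := ⟨D - 1, by omega⟩
    have hg : (X ^ d + h).natDegree ≤ d :=
      natDegree_add_le_of_degree_le (natDegree_X_pow_le d) (by omega)
    have hgap : (N + 1 - d + k) * d + 2 * d ≤ d * N + d := by
      have := Nat.mul_le_mul_right d (show N + 1 - d + k + 2 ≤ N + 1 by omega)
      rwa [add_mul, add_one_mul, mul_comm N] at this
    have hr : ((polyIter (X ^ d + h) (n + 1) - X ^ (N + 1)).comp (X ^ d + h)).natDegree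
        < d * N + i :=
      (natDegree_comp_le.trans (Nat.mul_le_mul hdeg hg)).trans_lt (by omega)
    rw [mul_add_one, Nat.add_sub_cancel, coeff_eq_zero_of_natDegree_lt hr, add_zero,
      coeff_X_pow_add_pow_succ hid (by omega), Nat.cast_succ]

end Iterates

section Commuting

variable {R : Type*} [CommRing R] [IsDomain R] {G : R[X]} {a b : R}

theorem eq_zero_of_C_mul_X_add_C_comp_comm [CharZero R] {D : ℕ}
    (hG : (G - X ^ D).natDegree < D - 1) (ha : a ≠ 0)
    (hcomm : (C a * X + C b).comp G = G.comp (C a * X + C b)) : b = 0 := by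
  have hlin : (C a * X + C b).natDegree ≤ 1 := natDegree_linear_le
  have hr : ((G - X ^ D).comp (C a * X + C b)).natDegree < D - 1 :=
    (natDegree_comp_le.trans (Nat.mul_le_mul_left _ hlin)).trans_lt (by simpa using hG)
  have hcoeff := congrArg (coeff · (D - 1)) hcomm
  rw [← sub_add_cancel G (X ^ D)] at hcoeff
  simp only [add_comp, mul_comp, C_comp, X_comp, X_pow_comp, coeff_add, coeff_C_mul,
    coeff_C, coeff_X_pow, coeff_eq_zero_of_natDegree_lt hG, coeff_eq_zero_of_natDegree_lt hr,
    coeff_C_mul_X_add_C_pow] at hcoeff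
  rw [if_neg (by omega), if_neg (by omega), Nat.sub_sub_self (by omega), pow_one,
    Nat.choose_symm (by omega), Nat.choose_one_right] at hcoeff
  have hD : (D : R) ≠ 0 := Nat.cast_ne_zero.mpr (by omega)
  simpa [hD, ha] using hcoeff

theorem pow_eq_self_of_C_mul_X_comp_comm (hcomm : (C a * X).comp G = G.comp (C a * X)) {j : ℕ}
    (hj : G.coeff j ≠ 0) : a ^ j = a := by
  have hcoeff := congrArg (coeff · j) hcomm
  simp only [mul_comp, C_comp, X_comp, coeff_C_mul, coeff_comp_C_mul_X] at hcoeff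
  exact mul_left_cancel₀ hj (by rw [← hcoeff, mul_comm])

theorem eq_one_of_C_mul_X_comp_comm (ha : a ≠ 0) (hcomm : (C a * X).comp G = G.comp (C a * X))
    {j : ℕ} (hj : G.coeff j ≠ 0) (hj' : G.coeff (j + 1) ≠ 0) : a = 1 := by
  have h := pow_eq_self_of_C_mul_X_comp_comm hcomm hj'
  rw [pow_succ, pow_eq_self_of_C_mul_X_comp_comm hcomm hj] at h
  exact mul_left_cancel₀ ha (by rw [h, mul_one])

end Commuting

section Tail

variable {R : Type*} [Semiring R] (t : R) (c : ℕ → R) {m : ℕ}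

theorem natDegree_sum_C_mul_X_pow_sub_le :
    (∑ i ∈ Finset.Icc 2 m, C (c i) * X ^ (m - i)).natDegree ≤ m - 2 :=
  natDegree_sum_le_of_forall_le _ _ fun i hi =>
    (natDegree_C_mul_X_pow_le _ _).trans (by rw [Finset.mem_Icc] at hi; omega)

theorem natDegree_C_mul_X_pow_add_sum_le :
    (C t * X ^ (m - 1) + ∑ i ∈ Finset.Icc 2 m, C (c i) * X ^ (m - i)).natDegree ≤ m - 1 :=
  natDegree_add_le_of_degree_le (natDegree_C_mul_X_pow_le _ _)
    ((natDegree_sum_C_mul_X_pow_sub_le c).trans (by omega))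

theorem coeff_C_mul_X_pow_add_sum_sub_one (hm : 1 < m) :
    (C t * X ^ (m - 1) + ∑ i ∈ Finset.Icc 2 m, C (c i) * X ^ (m - i)).coeff (m - 1) = t := by
  rw [coeff_add, coeff_C_mul_X_pow, if_pos rfl,
    coeff_eq_zero_of_natDegree_lt ((natDegree_sum_C_mul_X_pow_sub_le c).trans_lt (by omega)),
    add_zero]

theorem coeff_C_mul_X_pow_add_sum_sub_two (hm : 1 < m) :
    (C t * X ^ (m - 1) + ∑ i ∈ Finset.Icc 2 m, C (c i) * X ^ (m - i)).coeff (m - 2) = c 2 := by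
  rw [coeff_add, coeff_C_mul_X_pow, if_neg (by omega), zero_add, finsetSum_coeff,
    Finset.sum_eq_single 2]
  · simp
  · intro i hi hi2
    rw [Finset.mem_Icc] at hi
    rw [coeff_C_mul_X_pow, if_neg (by omega)]
  · simp [hm]

end Tail

theorem tK_ne_zero : tK ≠ 0 :=
  (_root_.map_ne_zero _).mpr RatFunc.X_ne_zero

theorem cK_mul_tK_add_cK_ne_zero {α β : ℂ} (hα : α ≠ 0) : cK α * tK + cK β ≠ 0 := by
  have hlin : (C α * X + C β : ℂ[X]) ≠ 0 := fun h =>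
    hα (by simpa using congrArg (coeff · 1) h)
  have : cK α * tK + cK β = algebraMap (RatFunc ℂ) (AlgebraicClosure (RatFunc ℂ))
      (algebraMap ℂ[X] (RatFunc ℂ) (C α * X + C β)) := by
    simp [cK, tK, RatFunc.algebraMap_C, RatFunc.algebraMap_X]
  rw [this, _root_.map_ne_zero, map_ne_zero_iff _ (IsFractionRing.injective ℂ[X] (RatFunc ℂ))]
  exact hlin

theorem stmt2 (d m : ℕ) (hm : 1 < m) (hd : m < d) (α β : ℕ → ℂ) (hα : α 2 ≠ 0)
    (g : Polynomial (AlgebraicClosure (RatFunc ℂ)))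
    (hg : g = X ^ d + C tK * X ^ (m - 1) +
      ∑ i ∈ Finset.Icc 2 m, C (cK (α i) * tK + cK (β i)) * X ^ (m - i))
    (a b : AlgebraicClosure (RatFunc ℂ)) (ha : a ≠ 0) (n : ℕ) (hn : 1 ≤ n)
    (hcomm : (C a * X + C b).comp (polyIter g n) = (polyIter g n).comp (C a * X + C b)) :
    a = 1 ∧ b = 0 := by
  obtain ⟨N, rfl⟩ : ∃ N, n = N + 1 := ⟨n - 1, by omega⟩
  set c : ℕ → AlgebraicClosure (RatFunc ℂ) := fun i => cK (α i) * tK + cK (β i)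
  have hh := natDegree_C_mul_X_pow_add_sum_le tK c (m := m)
  rw [add_assoc] at hg
  subst hg
  have hdN : d ≤ d ^ (N + 1) := Nat.le_self_pow N.succ_ne_zero d
  obtain rfl : b = 0 := eq_zero_of_C_mul_X_add_C_comp_comm
    ((natDegree_polyIter_succ_sub_le (by omega) hh N).trans_lt (by omega)) ha hcomm
  rw [C_0, add_zero] at hcomm
  have hdpow : (d : AlgebraicClosure (RatFunc ℂ)) ^ N ≠ 0 :=
    pow_ne_zero _ (Nat.cast_ne_zero.mpr (by omega))
  refine ⟨eq_one_of_C_mul_X_comp_comm ha hcomm (j := d ^ (N + 1) - d + (m - 2)) ?_ ?_, rfl⟩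
  · rw [coeff_polyIter_succ (by omega) hh (by omega) (by omega),
      coeff_C_mul_X_pow_add_sum_sub_two _ _ hm]
    exact mul_ne_zero hdpow (cK_mul_tK_add_cK_ne_zero hα)
  · rw [show d ^ (N + 1) - d + (m - 2) + 1 = d ^ (N + 1) - d + (m - 1) by omega,
      coeff_polyIter_succ (by omega) hh (by omega) (by omega),
      coeff_C_mul_X_pow_add_sum_sub_one _ _ hm]
    exact mul_ne_zero hdpow tK_ne_zero
end

section
/- Let d > m > 1 and g(z) = z^d + t·z^(m-1) + Σ_{i=2}^m (α_i t + β_i) z^(m-i) over the algebraic closure K of ℂ(t), with α_2 ≠ 0. There is no polynomial h ∈ K[z] of degree ≥ 2 and integer e > 1 with h^e = g, where h^e is the e-fold composition of h. -/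
open Polynomial

/-!
Rescale `h` by `x ↦ γ x` into a monic `H`. Comparing leading coefficients of `H^e` and of the
rescaled `g` gives `γ ^ (d - 1) = 1`, so `γ ∈ ℂ`; comparing next coefficients,
`nextCoeff (H^e) = k^(e-1) · nextCoeff H`, shows that `H` has no `z^(k-1)` term.
A monic polynomial of degree `k ≥ 2` is determined by its next coefficient and its `e`-th
iterate, so `H` is fixed by `Gal(K/ℂ(t))` and has coefficients in `ℂ(t)`. There the Gauss norm
of `|x| = 2 ^ deg x` satisfies `‖H^e‖ = ‖H‖^(k^(e-1))`, whereas `‖g‖ = 2` is attained at the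
coefficient `t`; as `‖H‖` is a power of `2`, this is impossible.
-/

section Iterate

variable {R : Type*}

theorem polyIter_eq_iterate [CommSemiring R] (p : R[X]) (n : ℕ) :
    polyIter p n = p.comp^[n] X := by
  induction n with
  | zero => rfl
  | succ n ih => rw [Function.iterate_succ_apply', ← ih]; rfl

theorem polyIter_one [CommSemiring R] (p : R[X]) : polyIter p 1 = p := comp_X

theorem map_polyIter [CommSemiring R] {S : Type*} [CommSemiring S] (f : R →+* S) (p : R[X])
    (n : ℕ) : (polyIter p n).map f = polyIter (p.map f) n := by
  induction n with
  | zero => exact map_X f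
  | succ n ih => rw [polyIter, polyIter, map_comp, ih]

theorem Polynomial.Monic.comp_eq_pow_add [CommSemiring R] {p : R[X]} (hp : p.Monic) (q : R[X]) :
    p.comp q = q ^ p.natDegree + ∑ j ∈ Finset.range p.natDegree, C (p.coeff j) * q ^ j := by
  rw [Polynomial.comp, eval₂_eq_sum_range, Finset.sum_range_succ, hp.coeff_natDegree, map_one,
    one_mul, add_comm]

variable [CommRing R] [IsDomain R]

theorem natDegree_polyIter (p : R[X]) (n : ℕ) : (polyIter p n).natDegree = p.natDegree ^ n := by
  simp [polyIter_eq_iterate]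

theorem monic_polyIter {p : R[X]} (hp : p.Monic) (hp0 : 0 < p.natDegree) (n : ℕ) :
    (polyIter p n).Monic := by
  induction n with
  | zero => exact monic_X
  | succ n ih => exact hp.comp ih (by rw [natDegree_polyIter]; positivity)

theorem Polynomial.Monic.nextCoeff_comp {p q : R[X]} (hp : p.Monic) (hq : q.Monic)
    (hp0 : 0 < p.natDegree) (hq2 : 2 ≤ q.natDegree) :
    (p.comp q).nextCoeff = p.natDegree * q.nextCoeff := by
  set k := p.natDegree
  have hpos : 0 < k * q.natDegree := by positivity
  have hlow : ∀ j ∈ Finset.range k, (C (p.coeff j) * q ^ j).natDegree < k * q.natDegree - 1 := by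
    intro j hj
    have hjk : (j + 1) * q.natDegree ≤ k * q.natDegree :=
      Nat.mul_le_mul_right _ (Finset.mem_range.mp hj)
    rw [add_mul, one_mul] at hjk
    calc (C (p.coeff j) * q ^ j).natDegree ≤ j * q.natDegree := by
          refine natDegree_C_mul_le _ _ |>.trans ?_
          rw [hq.natDegree_pow]
      _ < k * q.natDegree - 1 := by omega
  have hpow : (q ^ k).coeff (k * q.natDegree - 1) = k * q.nextCoeff := by
    rw [← hq.natDegree_pow, ← nextCoeff_of_natDegree_pos (by rwa [hq.natDegree_pow]),
      hq.nextCoeff_pow, nsmul_eq_mul]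
  rw [nextCoeff_of_natDegree_pos (by rwa [natDegree_comp]), natDegree_comp, hp.comp_eq_pow_add,
    coeff_add, finsetSum_coeff, hpow,
    Finset.sum_eq_zero fun j hj => coeff_eq_zero_of_natDegree_lt (hlow j hj), add_zero]

theorem nextCoeff_polyIter {p : R[X]} (hp : p.Monic) (hp2 : 2 ≤ p.natDegree) (n : ℕ) :
    (polyIter p (n + 1)).nextCoeff = (p.natDegree : R) ^ n * p.nextCoeff := by
  induction n with
  | zero => simp [polyIter_one]
  | succ n ih =>
    have hdeg : 2 ≤ (polyIter p (n + 1)).natDegree := by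
      rw [natDegree_polyIter]
      exact hp2.trans (Nat.le_self_pow (by omega) _)
    rw [polyIter, hp.nextCoeff_comp (monic_polyIter hp (by omega) _) (by omega) hdeg, ih]
    ring

end Iterate

section Uniqueness

variable {R : Type*} [CommRing R]

theorem comp_sub_comp_eq_mul (p A B : R[X]) :
    p.comp A - p.comp B = (A - B) * ∑ j ∈ Finset.range (p.natDegree + 1),
      C (p.coeff j) * ∑ i ∈ Finset.range j, A ^ i * B ^ (j - 1 - i) := by
  rw [Polynomial.comp, Polynomial.comp, eval₂_eq_sum_range, eval₂_eq_sum_range,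
    ← Finset.sum_sub_distrib, Finset.mul_sum]
  refine Finset.sum_congr rfl fun j _ => ?_
  rw [← mul_sub, ← geom_sum₂_mul]
  ring

section GeomSum

variable {A B : R[X]} (hA : A.Monic) (hB : B.Monic) (hAB : A.natDegree = B.natDegree)
include hA hB hAB

theorem natDegree_pow_mul_pow (i j : ℕ) : (A ^ i * B ^ j).natDegree = (i + j) * A.natDegree := by
  rw [(hA.pow i).natDegree_mul (hB.pow j), hA.natDegree_pow, hB.natDegree_pow, ← hAB, add_mul]

theorem natDegree_geom_sum₂_le (j : ℕ) :
    (∑ i ∈ Finset.range j, A ^ i * B ^ (j - 1 - i)).natDegree ≤ (j - 1) * A.natDegree :=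
  natDegree_sum_le_of_forall_le _ _ fun i hi => by
    rw [natDegree_pow_mul_pow hA hB hAB,
      Nat.add_sub_of_le (by have := Finset.mem_range.mp hi; omega)]

theorem coeff_geom_sum₂ (j : ℕ) :
    (∑ i ∈ Finset.range j, A ^ i * B ^ (j - 1 - i)).coeff ((j - 1) * A.natDegree) = j := by
  rw [finsetSum_coeff, Finset.sum_congr rfl fun i hi => ?_, Finset.sum_const, Finset.card_range,
    nsmul_one]
  have hdeg : (j - 1) * A.natDegree = (A ^ i * B ^ (j - 1 - i)).natDegree := by
    rw [natDegree_pow_mul_pow hA hB hAB,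
      Nat.add_sub_of_le (by have := Finset.mem_range.mp hi; omega)]
  rw [hdeg]
  exact ((hA.pow i).mul (hB.pow _)).coeff_natDegree

end GeomSum

theorem natDegree_sub_le_of_nextCoeff_eq {P Q : R[X]} (hP : P.Monic) (hQ : Q.Monic)
    (hPQ : P.natDegree = Q.natDegree) (hnext : P.nextCoeff = Q.nextCoeff) :
    (P - Q).natDegree ≤ P.natDegree - 2 := by
  refine natDegree_le_iff_coeff_eq_zero.mpr fun N hN => ?_
  rw [coeff_sub, sub_eq_zero]
  rcases lt_trichotomy N P.natDegree with h | rfl | h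
  · have hN : N = P.natDegree - 1 := by omega
    rwa [nextCoeff_of_natDegree_pos (by omega), nextCoeff_of_natDegree_pos (by omega), ← hPQ,
      ← hN] at hnext
  · rw [hP.coeff_natDegree, hPQ, hQ.coeff_natDegree]
  · rw [coeff_eq_zero_of_natDegree_lt h, coeff_eq_zero_of_natDegree_lt (hPQ ▸ h)]

variable [IsDomain R] [CharZero R]

theorem le_natDegree_comp_sub_comp {p A B : R[X]} (hp : p.Monic) (hp0 : 0 < p.natDegree)
    (hA : A.Monic) (hB : B.Monic) (hAB : A.natDegree = B.natDegree) (hne : A ≠ B) :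
    (p.natDegree - 1) * A.natDegree ≤ (p.comp A - p.comp B).natDegree := by
  rcases Nat.eq_zero_or_pos A.natDegree with hA0 | hA0
  · simp [hA0]
  set k := p.natDegree
  set T := ∑ j ∈ Finset.range (k + 1),
    C (p.coeff j) * ∑ i ∈ Finset.range j, A ^ i * B ^ (j - 1 - i)
  have hT : T.coeff ((k - 1) * A.natDegree) = k := by
    rw [finsetSum_coeff, Finset.sum_eq_single k]
    · rw [coeff_C_mul, hp.coeff_natDegree, one_mul, coeff_geom_sum₂ hA hB hAB]
    · rintro (_ | j) hj hjk
      · simp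
      rw [coeff_C_mul]
      refine mul_eq_zero_of_right _ (coeff_eq_zero_of_natDegree_lt ?_)
      have hjk' : j < k - 1 := by have := Finset.mem_range.mp hj; omega
      calc _ ≤ (j + 1 - 1) * A.natDegree := natDegree_geom_sum₂_le hA hB hAB (j + 1)
        _ < (k - 1) * A.natDegree := by simpa using Nat.mul_lt_mul_of_pos_right hjk' hA0
    · exact fun h => absurd (Finset.self_mem_range_succ k) h
  have hTk : T.coeff ((k - 1) * A.natDegree) ≠ 0 := by
    rw [hT]
    exact_mod_cast hp0.ne'
  have hT0 : T ≠ 0 := fun h0 => hTk (by rw [h0, coeff_zero])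
  rw [comp_sub_comp_eq_mul, natDegree_mul (sub_ne_zero.mpr hne) hT0]
  exact (le_natDegree_of_ne_zero hTk).trans (Nat.le_add_left _ _)

theorem eq_of_polyIter_eq {P Q : R[X]} (hP : P.Monic) (hQ : Q.Monic)
    (hPQ : P.natDegree = Q.natDegree) (hP2 : 2 ≤ P.natDegree) (hnext : P.nextCoeff = Q.nextCoeff)
    {e : ℕ} (he : e ≠ 0) (h : polyIter P e = polyIter Q e) : P = Q := by
  by_contra hne
  set k := P.natDegree
  have key : ∀ n, polyIter P (n + 1) ≠ polyIter Q (n + 1) := by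
    intro n
    induction n with
    | zero => simpa [polyIter_one] using hne
    | succ n ih =>
      -- `polyIter P (n + 2) - polyIter Q (n + 2) = (P ∘ A - P ∘ B) + (P - Q) ∘ B`, and the
      -- first summand has the larger degree.
      set A := polyIter P (n + 1)
      set B := polyIter Q (n + 1)
      have hA : A.natDegree = k ^ (n + 1) := natDegree_polyIter P _
      have hB : B.natDegree = k ^ (n + 1) := by rw [natDegree_polyIter, ← hPQ]
      have hlow := le_natDegree_comp_sub_comp hP (by omega) (monic_polyIter hP (by omega) _)
        (monic_polyIter hQ (by omega) _) (hA.trans hB.symm) ih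
      have hhigh : ((P - Q).comp B).natDegree ≤ (k - 2) * k ^ (n + 1) := by
        rw [natDegree_comp, hB]
        exact Nat.mul_le_mul_right _ (natDegree_sub_le_of_nextCoeff_eq hP hQ hPQ hnext)
      have hlt : (k - 2) * k ^ (n + 1) < (k - 1) * k ^ (n + 1) :=
        Nat.mul_lt_mul_of_pos_right (by omega) (by positivity)
      intro heq
      have hsum : P.comp A - P.comp B = -((P - Q).comp B) := by
        have : P.comp A - Q.comp B = 0 := sub_eq_zero.mpr heq
        rw [sub_comp]
        linear_combination this
      rw [hsum, natDegree_neg, hA] at hlow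
      exact (hlow.trans hhigh).not_gt hlt
  obtain ⟨n, rfl⟩ := Nat.exists_eq_succ_of_ne_zero he
  exact key n h

end Uniqueness

section Descent

variable {F K : Type*} [Field F] [Field K] [Algebra F K]

theorem map_algEquiv_of_mem_lifts (σ : K ≃ₐ[F] K) {p : K[X]} (hp : p ∈ lifts (algebraMap F K)) :
    p.map (σ : K →+* K) = p := by
  obtain ⟨q, rfl⟩ := (mem_lifts p).mp hp
  rw [map_map, show (σ : K →+* K).comp (algebraMap F K) = algebraMap F K from
    RingHom.ext σ.commutes]

theorem mem_lifts_of_polyIter_mem_lifts [IsGalois F K] [CharZero K] {H : K[X]} (hH : H.Monic)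
    (hH2 : 2 ≤ H.natDegree) {e : ℕ} (he : e ≠ 0)
    (hlift : polyIter H e ∈ lifts (algebraMap F K)) : H ∈ lifts (algebraMap F K) := by
  refine (lifts_iff_coeff_lifts H).mpr fun n =>
    (InfiniteGalois.mem_range_algebraMap_iff_fixed _).mpr fun σ => ?_
  have hiter : polyIter (H.map (σ : K →+* K)) e = polyIter H e := by
    rw [← map_polyIter, map_algEquiv_of_mem_lifts σ hlift]
  have hnext : σ H.nextCoeff = H.nextCoeff := by
    obtain ⟨e, rfl⟩ := Nat.exists_eq_succ_of_ne_zero he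
    have := congrArg nextCoeff hiter
    rw [nextCoeff_polyIter (hH.map _) (by rwa [natDegree_map]), nextCoeff_polyIter hH hH2,
      natDegree_map, nextCoeff_map σ.injective] at this
    exact mul_left_cancel₀ (pow_ne_zero _ (Nat.cast_ne_zero.mpr (by omega))) this
  have hσ : H.map (σ : K →+* K) = H :=
    eq_of_polyIter_eq (hH.map _) hH (natDegree_map _) (by rwa [natDegree_map])
      (by rwa [nextCoeff_map σ.injective]) he hiter
  simpa using congrArg (coeff · n) hσ

end Descent

theorem exists_eq_of_pow_eq_one {k L : Type*} [Field k] [IsAlgClosed k] [Field L] (f : k →+* L)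
    {x : L} {n : ℕ} (hn : n ≠ 0) (hx : x ^ n = 1) : ∃ a, f a = x := by
  have hq : (X ^ n - C 1 : k[X]).Monic := monic_X_pow_sub_C 1 hn
  have hroot : x ∈ ((X ^ n - C 1 : k[X]).map f).roots := by
    rw [mem_roots (hq.map f).ne_zero]
    simp [hx]
  rw [(IsAlgClosed.splits _).roots_map_of_injective f.injective] at hroot
  obtain ⟨a, -, rfl⟩ := Multiset.mem_map.mp hroot
  exact ⟨a, rfl⟩

section ScaleConj

variable {K : Type*} [Field K]

noncomputable def scaleConj (u : K) (p : K[X]) : K[X] := C u * p.comp (C u⁻¹ * X)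

theorem coeff_scaleConj (u : K) (p : K[X]) (n : ℕ) :
    (scaleConj u p).coeff n = u * p.coeff n * u⁻¹ ^ n := by
  rw [scaleConj, coeff_C_mul, comp_C_mul_X_coeff, mul_assoc]

theorem map_scaleConj {L : Type*} [Field L] (f : K →+* L) (u : K) (p : K[X]) :
    (scaleConj u p).map f = scaleConj (f u) (p.map f) := by
  simp [scaleConj, map_comp]

section

variable {u : K} (hu : u ≠ 0)
include hu

theorem natDegree_scaleConj (p : K[X]) : (scaleConj u p).natDegree = p.natDegree := by
  rw [scaleConj, natDegree_C_mul hu, natDegree_comp, natDegree_C_mul_X _ (inv_ne_zero hu), mul_one]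

theorem scaleConj_X : scaleConj u X = X := by
  rw [scaleConj, X_comp, ← mul_assoc, ← C_mul, mul_inv_cancel₀ hu, C_1, one_mul]

theorem scaleConj_comp (p q : K[X]) :
    scaleConj u (p.comp q) = (scaleConj u p).comp (scaleConj u q) := by
  rw [scaleConj, scaleConj, scaleConj, mul_comp, C_comp, comp_assoc, comp_assoc, mul_comp, C_comp,
    X_comp, ← mul_assoc, ← C_mul, inv_mul_cancel₀ hu, C_1, one_mul]

theorem polyIter_scaleConj (p : K[X]) (n : ℕ) :
    polyIter (scaleConj u p) n = scaleConj u (polyIter p n) := by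
  induction n with
  | zero => exact (scaleConj_X hu).symm
  | succ n ih => rw [polyIter, polyIter, ih, scaleConj_comp hu]

theorem nextCoeff_scaleConj {p : K[X]} (hp : p.nextCoeff = 0) : (scaleConj u p).nextCoeff = 0 := by
  rcases Nat.eq_zero_or_pos p.natDegree with h0 | hpos
  · rw [nextCoeff, natDegree_scaleConj hu, if_pos h0]
  rw [nextCoeff_of_natDegree_pos (by rwa [natDegree_scaleConj hu]), natDegree_scaleConj hu,
    coeff_scaleConj, ← nextCoeff_of_natDegree_pos hpos, hp, mul_zero, zero_mul]

theorem scaleConj_monic {p : K[X]} (hp : 0 < p.natDegree)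
    (hlead : u ^ (p.natDegree - 1) = p.leadingCoeff) : (scaleConj u p).Monic := by
  rw [Monic, leadingCoeff, natDegree_scaleConj hu, coeff_scaleConj, coeff_natDegree, ← hlead,
    ← pow_succ', Nat.sub_add_cancel hp, inv_pow, mul_inv_cancel₀ (pow_ne_zero _ hu)]

theorem pow_eq_one_of_scaleConj_monic {p : K[X]} (hp : p.Monic) (hpu : (scaleConj u p).Monic) :
    u ^ (p.natDegree - 1) = 1 := by
  have h := hpu.coeff_natDegree
  rw [natDegree_scaleConj hu, coeff_scaleConj, hp.coeff_natDegree, mul_one] at h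
  rcases Nat.eq_zero_or_pos p.natDegree with h0 | hpos
  · rw [h0, pow_zero]
  obtain ⟨j, hj⟩ := Nat.exists_eq_add_one_of_ne_zero hpos.ne'
  rw [hj, pow_succ, mul_left_comm, mul_inv_cancel₀ hu, mul_one, inv_pow, inv_eq_one] at h
  rwa [hj, Nat.add_sub_cancel]

end

theorem exists_scaleConj_monic [IsAlgClosed K] {p : K[X]} (hp : 2 ≤ p.natDegree) :
    ∃ u ≠ 0, (scaleConj u p).Monic := by
  obtain ⟨u, hu⟩ := IsAlgClosed.exists_pow_nat_eq p.leadingCoeff (by omega : 0 < p.natDegree - 1)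
  have hu0 : u ≠ 0 := by
    rintro rfl
    rw [zero_pow (by omega), eq_comm, leadingCoeff_eq_zero] at hu
    simp [hu] at hp
  exact ⟨u, hu0, scaleConj_monic hu0 (by omega) hu⟩

end ScaleConj

section GaussNorm

variable {K : Type*} [Field K] {v : AbsoluteValue K ℝ} (hv : IsNonarchimedean v)

noncomputable def gaussAbv : AbsoluteValue K[X] ℝ :=
  letI := gaussNorm_isAbsoluteValue hv one_pos
  IsAbsoluteValue.toAbsoluteValue (gaussNorm v 1)

theorem gaussAbv_apply (p : K[X]) : gaussAbv hv p = p.gaussNorm v 1 := rfl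

theorem isNonarchimedean_gaussAbv : IsNonarchimedean (gaussAbv hv) :=
  isNonarchimedean_gaussNorm v hv zero_le_one

theorem le_gaussAbv (p : K[X]) (n : ℕ) : v (p.coeff n) ≤ gaussAbv hv p := by
  simpa [gaussAbv_apply] using p.le_gaussNorm v zero_le_one n

theorem exists_eq_gaussAbv (p : K[X]) : ∃ n, gaussAbv hv p = v (p.coeff n) := by
  simpa [gaussAbv_apply] using p.exists_eq_gaussNorm v 1

theorem gaussAbv_C_mul_X_pow (a : K) (n : ℕ) : gaussAbv hv (C a * X ^ n) = v a := by
  rw [gaussAbv_apply, C_mul_X_pow_eq_monomial, gaussNorm_monomial, one_pow, mul_one]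

theorem one_le_gaussAbv {p : K[X]} (hp : p.Monic) : 1 ≤ gaussAbv hv p := by
  simpa [hp.coeff_natDegree] using le_gaussAbv hv p p.natDegree

theorem gaussAbv_scaleConj {u : K} (hu : v u = 1) (p : K[X]) :
    gaussAbv hv (scaleConj u p) = gaussAbv hv p := by
  have hcoeff : ∀ n, v ((scaleConj u p).coeff n) = v (p.coeff n) := fun n => by
    simp [coeff_scaleConj, hu]
  obtain ⟨i, hi⟩ := exists_eq_gaussAbv hv (scaleConj u p)
  obtain ⟨j, hj⟩ := exists_eq_gaussAbv hv p
  refine le_antisymm ?_ ?_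
  · rw [hi, hcoeff]
    exact le_gaussAbv hv p i
  · rw [hj, ← hcoeff]
    exact le_gaussAbv hv _ j

theorem gaussAbv_comp {H Q : K[X]} (hH : H.Monic) (hH0 : 0 < H.natDegree)
    (hnext : H.nextCoeff = 0) (hQ : Q.Monic) (hQ0 : 0 < Q.natDegree)
    (hle : gaussAbv hv H ≤ gaussAbv hv Q) :
    gaussAbv hv (H.comp Q) = gaussAbv hv Q ^ H.natDegree := by
  set N := gaussAbv hv
  obtain ⟨j, hj⟩ := Nat.exists_eq_add_one_of_ne_zero hH0.ne'
  have hsplit : H.comp Q = Q ^ H.natDegree + ∑ i ∈ Finset.range j, C (H.coeff i) * Q ^ i := by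
    rw [hH.comp_eq_pow_add, hj, Finset.sum_range_succ, ← Nat.add_sub_cancel j 1, ← hj,
      ← nextCoeff_of_natDegree_pos hH0, hnext, C_0, zero_mul, add_zero]
  have hQ1 : 1 ≤ N Q := one_le_gaussAbv hv hQ
  have hlow : N (∑ i ∈ Finset.range j, C (H.coeff i) * Q ^ i) ≤ N Q ^ j := by
    refine Finset.sum_induction _ (fun x => N x ≤ N Q ^ j)
      (fun a b ha hb => (isNonarchimedean_gaussAbv hv a b).trans (max_le ha hb))
      (by rw [map_zero]; positivity) fun i hi => ?_
    calc N (C (H.coeff i) * Q ^ i) = v (H.coeff i) * N Q ^ i := by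
          rw [map_mul, map_pow, ← gaussAbv_C_mul_X_pow hv _ 0, pow_zero, mul_one]
      _ ≤ N Q * N Q ^ i := by gcongr; exact (le_gaussAbv hv H i).trans hle
      _ ≤ N Q ^ j := by
          rw [← pow_succ']
          exact pow_le_pow_right₀ hQ1 (Finset.mem_range.mp hi)
  rw [hsplit]
  rcases hQ1.eq_or_lt with h1 | h1
  · rw [← h1, one_pow]
    refine le_antisymm ((isNonarchimedean_gaussAbv hv _ _).trans (max_le ?_ ?_))
      (hsplit ▸ one_le_gaussAbv hv (hH.comp hQ hQ0.ne'))
    · rw [map_pow, ← h1, one_pow]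
    · exact hlow.trans (by rw [← h1, one_pow])
  · rw [← map_pow]
    refine (isNonarchimedean_gaussAbv hv).add_eq_left_of_lt (hlow.trans_lt ?_)
    rw [map_pow]
    exact pow_lt_pow_right₀ h1 (by omega)

theorem gaussAbv_polyIter {H : K[X]} (hH : H.Monic) (hH0 : 0 < H.natDegree)
    (hnext : H.nextCoeff = 0) (n : ℕ) :
    gaussAbv hv (polyIter H (n + 1)) = gaussAbv hv H ^ H.natDegree ^ n := by
  induction n with
  | zero => rw [polyIter_one, pow_zero, pow_one]
  | succ n ih =>
    have hle : gaussAbv hv H ≤ gaussAbv hv (polyIter H (n + 1)) := by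
      rw [ih]
      exact le_self_pow₀ (one_le_gaussAbv hv hH) (by positivity)
    rw [polyIter, gaussAbv_comp hv hH hH0 hnext (monic_polyIter hH hH0 _)
      (by rw [natDegree_polyIter]; positivity) hle, ih, ← pow_mul, pow_succ]

end GaussNorm

section InftyAbv

open WithZeroMulInt

variable (F : Type*) [Field F]

theorem toNNReal_inftyValuation_add_le [DecidableEq (RatFunc F)] (x y : RatFunc F) :
    toNNReal two_ne_zero (RatFunc.inftyValuation F (x + y)) ≤
      max (toNNReal two_ne_zero (RatFunc.inftyValuation F x))
        (toNNReal two_ne_zero (RatFunc.inftyValuation F y)) := by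
  have h_mono := (toNNReal_strictMono (e := 2) one_lt_two).monotone
  rw [← h_mono.map_max]
  exact h_mono ((RatFunc.inftyValuation F).map_add x y)

open Classical in
noncomputable def inftyAbv : AbsoluteValue (RatFunc F) ℝ where
  toFun x := toNNReal two_ne_zero (RatFunc.inftyValuation F x)
  map_mul' _ _ := by simp
  nonneg' _ := NNReal.zero_le_coe
  eq_zero' _ := by simp
  add_le' x y := by
    exact_mod_cast (toNNReal_inftyValuation_add_le F x y).trans
      (max_le_add_of_nonneg bot_le bot_le)

variable {F}

theorem isNonarchimedean_inftyAbv : IsNonarchimedean (inftyAbv F) := by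
  classical
  intro x y
  exact_mod_cast toNNReal_inftyValuation_add_le F x y

theorem inftyAbv_of_ne_zero {x : RatFunc F} (hx : x ≠ 0) : inftyAbv F x = 2 ^ x.intDegree := by
  classical
  change (toNNReal two_ne_zero (RatFunc.inftyValuation F x) : ℝ) = _
  rw [RatFunc.inftyValuation_apply, RatFunc.inftyValuation_of_nonzero F hx,
    toNNReal_neg_apply _ (by simp), WithZero.toAdd_unzero_eq_log, WithZero.log_exp]
  simp

theorem inftyAbv_C {a : F} (ha : a ≠ 0) : inftyAbv F (RatFunc.C a) = 1 := by
  rw [inftyAbv_of_ne_zero (by simpa using ha), RatFunc.intDegree_C, zpow_zero]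

theorem inftyAbv_X : inftyAbv F RatFunc.X = 2 := by
  rw [inftyAbv_of_ne_zero RatFunc.X_ne_zero, RatFunc.intDegree_X, zpow_one]

theorem inftyAbv_pow_ne_two (x : RatFunc F) {n : ℕ} (hn : 2 ≤ n) : inftyAbv F x ^ n ≠ 2 := by
  rcases eq_or_ne x 0 with rfl | hx
  · simp [zero_pow (by omega : n ≠ 0)]
  rw [inftyAbv_of_ne_zero hx, ← zpow_natCast, ← zpow_mul]
  intro h
  have : x.intDegree * n = 1 :=
    zpow_right_injective₀ two_pos (by norm_num) (h.trans (zpow_one 2).symm)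
  have := Int.eq_one_of_mul_eq_one_left (by positivity) this
  omega

end InftyAbv

section Family

variable {F : Type*} [Field F] (d m : ℕ) (α β : ℕ → F)

noncomputable def gPolyTail : (RatFunc F)[X] :=
  C RatFunc.X * X ^ (m - 1) +
    ∑ i ∈ Finset.Icc 2 m, C (RatFunc.C (α i) * RatFunc.X + RatFunc.C (β i)) * X ^ (m - i)

noncomputable def gPoly : (RatFunc F)[X] := X ^ d + gPolyTail m α β

theorem natDegree_gPolyTail_le : (gPolyTail m α β).natDegree ≤ m - 1 :=
  natDegree_add_le_of_degree_le (natDegree_C_mul_X_pow_le _ _) <|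
    natDegree_sum_le_of_forall_le _ _ fun i hi =>
      (natDegree_C_mul_X_pow_le _ _).trans (by have := Finset.mem_Icc.mp hi; omega)

theorem coeff_gPolyTail : (gPolyTail m α β).coeff (m - 1) = RatFunc.X := by
  rw [gPolyTail, coeff_add, coeff_C_mul_X_pow, if_pos rfl, finsetSum_coeff,
    Finset.sum_eq_zero fun i hi => ?_, add_zero]
  rw [coeff_C_mul_X_pow, if_neg]
  have := Finset.mem_Icc.mp hi
  omega

theorem gaussAbv_gPolyTail_le : gaussAbv isNonarchimedean_inftyAbv (gPolyTail m α β) ≤ 2 := by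
  set N := gaussAbv (isNonarchimedean_inftyAbv (F := F))
  have hN := isNonarchimedean_gaussAbv (isNonarchimedean_inftyAbv (F := F))
  have hC : ∀ a : F, inftyAbv F (RatFunc.C a) ≤ 1 := fun a => by
    rcases eq_or_ne a 0 with rfl | ha
    · simp
    · exact (inftyAbv_C ha).le
  refine (hN _ _).trans (max_le ?_ (Finset.sum_induction _ (fun x => N x ≤ 2)
    (fun a b ha hb => (hN a b).trans (max_le ha hb)) (by simp) fun i _ => ?_))
  · rw [gaussAbv_C_mul_X_pow, inftyAbv_X]
  · rw [gaussAbv_C_mul_X_pow]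
    refine (isNonarchimedean_inftyAbv _ _).trans (max_le ?_ ((hC _).trans one_le_two))
    rw [map_mul, inftyAbv_X]
    exact mul_le_of_le_one_left zero_le_two (hC _)

variable {d m}

theorem natDegree_gPolyTail_lt (hd : m < d) : (gPolyTail m α β).natDegree < d :=
  (natDegree_gPolyTail_le m α β).trans_lt (by omega)

theorem gPoly_monic (hd : m < d) : (gPoly d m α β).Monic :=
  (monic_X_pow d).add_of_left (degree_lt_degree (by simpa using natDegree_gPolyTail_lt α β hd))

theorem natDegree_gPoly (hd : m < d) : (gPoly d m α β).natDegree = d := by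
  rw [gPoly, natDegree_add_eq_left_of_natDegree_lt (by simpa using natDegree_gPolyTail_lt α β hd),
    natDegree_X_pow]

theorem nextCoeff_gPoly (hm : 0 < m) (hd : m < d) : (gPoly d m α β).nextCoeff = 0 := by
  rw [nextCoeff_of_natDegree_pos (by rw [natDegree_gPoly α β hd]; omega), natDegree_gPoly α β hd,
    gPoly, coeff_add, coeff_X_pow, if_neg (by omega), zero_add,
    coeff_eq_zero_of_natDegree_lt ((natDegree_gPolyTail_le m α β).trans_lt (by omega))]

theorem gaussAbv_gPoly (hd : m < d) : gaussAbv isNonarchimedean_inftyAbv (gPoly d m α β) = 2 := by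
  have hN := isNonarchimedean_gaussAbv (isNonarchimedean_inftyAbv (F := F))
  refine le_antisymm ((hN _ _).trans (max_le ?_ (gaussAbv_gPolyTail_le m α β))) ?_
  · have := gaussAbv_C_mul_X_pow isNonarchimedean_inftyAbv (1 : RatFunc F) d
    rw [C_1, one_mul, map_one] at this
    exact this.le.trans one_le_two
  · have := le_gaussAbv isNonarchimedean_inftyAbv (gPoly d m α β) (m - 1)
    rwa [gPoly, coeff_add, coeff_X_pow, if_neg (by omega), zero_add, coeff_gPolyTail,
      inftyAbv_X] at this

end Family

theorem polyIter_ne_scaleConj_gPoly {F : Type*} [Field F] [CharZero F] {d m : ℕ} (hm : 0 < m)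
    (hd : m < d) (α β : ℕ → F) {ζ : F} (hζ : ζ ≠ 0) {H : (RatFunc F)[X]} (hH : H.Monic)
    (hH2 : 2 ≤ H.natDegree) {e : ℕ} (he : 2 ≤ e) :
    polyIter H e ≠ scaleConj (RatFunc.C ζ) (gPoly d m α β) := by
  intro hHe
  obtain ⟨n, rfl⟩ := Nat.exists_eq_add_one_of_ne_zero (by omega : e ≠ 0)
  have hCζ : RatFunc.C ζ ≠ 0 := by simpa using hζ
  have hnext : H.nextCoeff = 0 := by
    have := nextCoeff_polyIter hH hH2 n
    rw [hHe, nextCoeff_scaleConj hCζ (nextCoeff_gPoly α β hm hd), eq_comm] at this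
    exact (mul_eq_zero.mp this).resolve_left (pow_ne_zero _ (Nat.cast_ne_zero.mpr (by omega)))
  have hnorm := gaussAbv_polyIter isNonarchimedean_inftyAbv hH (by omega) hnext n
  rw [hHe, gaussAbv_scaleConj _ (inftyAbv_C hζ), gaussAbv_gPoly α β hd] at hnorm
  obtain ⟨i, hi⟩ := exists_eq_gaussAbv isNonarchimedean_inftyAbv H
  rw [hi] at hnorm
  exact inftyAbv_pow_ne_two _ (hH2.trans (Nat.le_self_pow (by omega) _)) hnorm.symm

theorem map_gPoly (d m : ℕ) (α β : ℕ → ℂ) :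
    (gPoly d m α β).map (algebraMap (RatFunc ℂ) (AlgebraicClosure (RatFunc ℂ))) =
      X ^ d + C tK * X ^ (m - 1) +
        ∑ i ∈ Finset.Icc 2 m, C (cK (α i) * tK + cK (β i)) * X ^ (m - i) := by
  simp [gPoly, gPolyTail, Polynomial.map_sum, tK, cK, RatFunc.algebraMap_eq_C, add_assoc]

theorem stmt3_general (d m : ℕ) (hm : 1 < m) (hd : m < d) (α β : ℕ → ℂ)
    (g : Polynomial (AlgebraicClosure (RatFunc ℂ)))
    (hg : g = X ^ d + C tK * X ^ (m - 1) +
      ∑ i ∈ Finset.Icc 2 m, C (cK (α i) * tK + cK (β i)) * X ^ (m - i)) :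
    ¬ ∃ (h : Polynomial (AlgebraicClosure (RatFunc ℂ))) (e : ℕ),
      2 ≤ h.natDegree ∧ 1 < e ∧ polyIter h e = g := by
  rintro ⟨h, e, hk, he, hiter⟩
  set φ := algebraMap (RatFunc ℂ) (AlgebraicClosure (RatFunc ℂ))
  rw [← map_gPoly] at hg
  obtain ⟨γ, hγ0, hH⟩ := exists_scaleConj_monic hk
  have hHdeg : (scaleConj γ h).natDegree = h.natDegree := natDegree_scaleConj hγ0 h
  have hHe : polyIter (scaleConj γ h) e = scaleConj γ g := by rw [polyIter_scaleConj hγ0, hiter]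
  obtain ⟨ζ, rfl⟩ : ∃ ζ, φ (RatFunc.C ζ) = γ := by
    refine exists_eq_of_pow_eq_one (φ.comp RatFunc.C) (by omega : d - 1 ≠ 0) ?_
    have := pow_eq_one_of_scaleConj_monic hγ0 (hg ▸ (gPoly_monic α β hd).map φ)
      (hHe ▸ monic_polyIter hH (by omega) e)
    rwa [hg, natDegree_map, natDegree_gPoly α β hd] at this
  have hlift : polyIter (scaleConj (φ (RatFunc.C ζ)) h) e ∈ lifts φ :=
    (mem_lifts _).mpr ⟨scaleConj (RatFunc.C ζ) (gPoly d m α β), by rw [hHe, hg, map_scaleConj]⟩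
  obtain ⟨H, hHmap, hHdeg', hHmonic⟩ := lifts_and_natDegree_eq_and_monic
    (mem_lifts_of_polyIter_mem_lifts hH (by omega) (by omega) hlift) hH
  exact polyIter_ne_scaleConj_gPoly (by omega) hd α β (by simpa using hγ0) hHmonic (by omega) he
    (map_injective φ φ.injective (by rw [map_polyIter, hHmap, hHe, hg, map_scaleConj]))

theorem stmt3 (d m : ℕ) (hm : 1 < m) (hd : m < d) (α β : ℕ → ℂ) (hα : α 2 ≠ 0)
    (g : Polynomial (AlgebraicClosure (RatFunc ℂ)))
    (hg : g = X ^ d + C tK * X ^ (m - 1) +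
      ∑ i ∈ Finset.Icc 2 m, C (cK (α i) * tK + cK (β i)) * X ^ (m - i)) :
    ¬ ∃ (h : Polynomial (AlgebraicClosure (RatFunc ℂ))) (e : ℕ),
      2 ≤ h.natDegree ∧ 1 < e ∧ polyIter h e = g :=
  stmt3_general d m hm hd α β g hg
end

section
/- Let h ∈ ℂ(t)[z] be a polynomial of degree s ≥ 1 that is monic in z, and suppose that for some integer e ≥ 1 the e-fold composition h^e has all coefficients in ℂ[t]. Then all coefficients of h lie in ℂ[t]. -/
open Polynomial

lemma polyIter_succ_right {R : Type*} [CommSemiring R] (p : Polynomial R) (n : ℕ) :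
    polyIter p (n + 1) = (polyIter p n).comp p := by
  induction n with
  | zero => simp [polyIter]
  | succ n ih =>
    calc polyIter p (n+2) = p.comp ((polyIter p n).comp p) := by rw [← ih]; rfl
    _ = (p.comp (polyIter p n)).comp p := (comp_assoc _ _ _).symm
    _ = (polyIter p (n+1)).comp p := rfl

lemma polyIter_monic {K : Type*} [Field K] {p : Polynomial K} (hp : p.Monic)
    (hd : p.natDegree ≠ 0) (n : ℕ) :
    (polyIter p n).Monic ∧ (polyIter p n).natDegree = p.natDegree ^ n := by
  induction n with
  | zero => simp [polyIter, monic_X]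
  | succ n ih =>
    constructor
    · exact hp.comp ih.1 (by rw [ih.2]; positivity)
    · show (p.comp (polyIter p n)).natDegree = _
      rw [natDegree_comp, ih.2, pow_succ, mul_comm]

theorem stmt5 (s : ℕ) (hs : 1 ≤ s) (h : Polynomial (RatFunc ℂ))
    (hmonic : h.Monic) (hdeg : h.natDegree = s)
    (e : ℕ) (he : 1 ≤ e)
    (hint : ∀ i, (polyIter h e).coeff i ∈ (algebraMap (Polynomial ℂ) (RatFunc ℂ)).range) :
    ∀ i, h.coeff i ∈ (algebraMap (Polynomial ℂ) (RatFunc ℂ)).range := by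
  set φ := algebraMap (Polynomial ℂ) (RatFunc ℂ) with hφ
  have hφinj : Function.Injective φ := IsFractionRing.injective _ _
  obtain ⟨e', rfl⟩ : ∃ e', e = e' + 1 := ⟨e - 1, by omega⟩
  set H := polyIter h (e' + 1) with hHdef
  obtain ⟨Hr, hHr⟩ : ∃ Hr : Polynomial (Polynomial ℂ), Hr.map φ = H :=
    (mem_lifts _).mp ((lifts_iff_coeff_lifts _).mpr (fun n => by
      obtain ⟨y, hy⟩ := hint n; exact ⟨y, hy⟩))
  have hsne : s ≠ 0 := by omega
  have hHfacts := polyIter_monic hmonic (hdeg ▸ hsne) (e' + 1)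
  have hHdegpos : 0 < H.natDegree := by rw [hHfacts.2, hdeg]; positivity
  have hhdegpos : (0 : WithBot ℕ) < h.degree :=
    natDegree_pos_iff_degree_pos.mp (by omega)
  -- u := h - C (h.eval 0) is monic
  have humonic : (h - C (h.eval 0)).Monic := by
    rw [sub_eq_add_neg]
    exact hmonic.add_of_left (lt_of_le_of_lt (by simpa using degree_C_le) hhdegpos)
  -- v := H - C (H.coeff 0) is monic, lifts to vr
  have hvmonic : (H - C (H.coeff 0)).Monic := by
    rw [sub_eq_add_neg]
    exact hHfacts.1.add_of_left (lt_of_le_of_lt (by simpa using degree_C_le)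
      (natDegree_pos_iff_degree_pos.mp hHdegpos))
  have hvr : (Hr - C (Hr.coeff 0)).map φ = H - C (H.coeff 0) := by
    rw [Polynomial.map_sub, Polynomial.map_C, ← coeff_map, hHr]
  have hvrmonic : (Hr - C (Hr.coeff 0)).Monic :=
    hφinj.monic_map_iff.mpr (hvr ▸ hvmonic)
  -- divisibility
  set G := polyIter h e' with hGdef
  have hcomp : H = G.comp h := polyIter_succ_right h e'
  obtain ⟨c, hc⟩ : (X - C (h.eval 0)) ∣ (G - C (G.eval (h.eval 0))) :=
    dvd_iff_isRoot.mpr (by simp)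
  have hdvd : (h - C (h.eval 0)) ∣ (H - C (H.coeff 0)) := by
    refine ⟨c.comp h, ?_⟩
    have h2 : H.coeff 0 = G.eval (h.eval 0) := by
      rw [coeff_zero_eq_eval_zero, hcomp, eval_comp]
    rw [h2, hcomp]
    calc G.comp h - C (G.eval (h.eval 0)) = (G - C (G.eval (h.eval 0))).comp h := by
          rw [sub_comp, C_comp]
      _ = ((X - C (h.eval 0)) * c).comp h := by rw [← hc]
      _ = (h - C (h.eval 0)) * c.comp h := by rw [mul_comp, sub_comp, X_comp, C_comp]
  obtain ⟨u', hu'⟩ := IsIntegrallyClosed.eq_map_mul_C_of_dvd (RatFunc ℂ) hvrmonic (hvr ▸ hdvd)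
  rw [humonic.leadingCoeff, map_one, mul_one] at hu'
  -- coefficients of index ≥ 1
  have hcoeffs : ∀ i, 1 ≤ i → h.coeff i ∈ φ.range := by
    intro i hi
    refine ⟨u'.coeff i, ?_⟩
    rw [← coeff_map, hu', coeff_sub, coeff_C, if_neg (by omega), sub_zero]
  -- the constant coefficient
  have hc0 : h.coeff 0 ∈ φ.range := by
    rw [coeff_zero_eq_eval_zero]
    by_cases hs1 : s = 1
    · -- degree 1 case: direct computation
      have hXC : h = X + C (h.coeff 0) := hmonic.eq_X_add_C (by omega)
      have heval : ∀ y, h.eval y = y + h.eval 0 := by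
        intro y
        nth_rewrite 1 [hXC]
        rw [eval_add, eval_X, eval_C, coeff_zero_eq_eval_zero]
      have key : ∀ k, (polyIter h k).eval 0 = k • (h.eval 0) := by
        intro k
        induction k with
        | zero => simp [polyIter]
        | succ k ih =>
          show (h.comp (polyIter h k)).eval 0 = _
          rw [eval_comp, heval, ih, succ_nsmul]
      obtain ⟨r, hr⟩ := hint 0
      rw [coeff_zero_eq_eval_zero, key] at hr
      have hne : ((e' + 1 : ℕ) : ℂ) ≠ 0 := by exact_mod_cast Nat.succ_ne_zero e'
      refine ⟨C (((e' + 1 : ℕ) : ℂ))⁻¹ * r, ?_⟩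
      have h1 : φ (C (((e' + 1 : ℕ) : ℂ))) = ((e' + 1 : ℕ) : RatFunc ℂ) := by
        rw [Polynomial.C_eq_natCast, map_natCast]
      have h2 : φ (C (((e' + 1 : ℕ) : ℂ))⁻¹) * ((e' + 1 : ℕ) : RatFunc ℂ) = 1 := by
        rw [← h1, ← map_mul, ← C_mul, inv_mul_cancel₀ hne, C_1, map_one]
      rw [map_mul, hr, nsmul_eq_mul, ← mul_assoc, h2, one_mul]
    · -- degree ≥ 2 case: integrality
      have hs2 : 2 ≤ s := by omega
      have hu'monic : u'.Monic := hφinj.monic_map_iff.mpr (hu' ▸ humonic)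
      have hu'deg : u'.natDegree = s := by
        have := hu'monic.natDegree_map φ
        rw [hu', natDegree_sub_C, hdeg] at this
        exact this.symm
      have hhe : h = u'.map φ + C (h.eval 0) := by rw [hu']; ring
      have heval2 : ∀ y, h.eval y = eval₂ φ y u' + h.eval 0 := by
        intro y
        nth_rewrite 1 [hhe]
        rw [eval_add, eval_C, eval_map]
      have key : ∀ k, ∃ P : Polynomial (Polynomial ℂ), P.Monic ∧ P.natDegree = s ^ k ∧
          (polyIter h (k + 1)).eval 0 = eval₂ φ (h.eval 0) P := by
        intro k
        induction k with
        | zero =>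
          refine ⟨X, monic_X, by simp, ?_⟩
          show (h.comp (polyIter h 0)).eval 0 = _
          rw [show polyIter h 0 = X from rfl, comp_X, eval₂_X]
        | succ k ih =>
          obtain ⟨P, hPm, hPd, hPe⟩ := ih
          have hcm : (u'.comp P).Monic := hu'monic.comp hPm (by rw [hPd]; positivity)
          have hcd : (u'.comp P).natDegree = s ^ (k + 1) := by
            rw [natDegree_comp, hu'deg, hPd, pow_succ, mul_comm]
          have hlt : (X : Polynomial (Polynomial ℂ)).degree < (u'.comp P).degree :=
            degree_lt_degree (by rw [natDegree_X, hcd]; exact one_lt_pow₀ (by omega) (by omega))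
          refine ⟨u'.comp P + X, hcm.add_of_left hlt, ?_, ?_⟩
          · rw [natDegree_add_eq_left_of_degree_lt hlt, hcd]
          · show (h.comp (polyIter h (k + 1))).eval 0 = _
            rw [eval_comp, hPe, heval2, eval₂_add, eval₂_X, eval₂_comp]
      obtain ⟨P, hPm, hPd, hPe⟩ := key e'
      obtain ⟨r, hr⟩ := hint 0
      have hint0 : φ r = eval₂ φ (h.eval 0) P := by
        rw [hr, coeff_zero_eq_eval_zero, hPe]
      have hQ : IsIntegral (Polynomial ℂ) (h.eval 0) := by
        refine ⟨P - C r, ?_, ?_⟩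
        · rw [sub_eq_add_neg]
          exact hPm.add_of_left (lt_of_le_of_lt (by simpa using degree_C_le)
            (natDegree_pos_iff_degree_pos.mp (by rw [hPd]; positivity)))
        · show eval₂ φ (h.eval 0) (P - C r) = 0
          rw [eval₂_sub, eval₂_C, ← hint0, sub_self]
      obtain ⟨y, hy⟩ := IsIntegrallyClosed.isIntegral_iff.mp hQ
      exact ⟨y, hy⟩
  intro i
  match i with
  | 0 => exact hc0
  | i + 1 => exact hcoeffs (i + 1) (by omega)
end

section
/- Let d > m > 2 and let g_t(z) = z^d + t z^(m-1) + Σ_{i=2}^m (α_i t + β_i) z^(m-i) with α_2 ≠ 0. Let P(t), Q(t) ∈ ℂ[t] each have t-degree d^(n-2) for some n > 2 (arising as P = g_t^(n-1)(c_m), Q = g_t^(n-1)(c_{m+1})). If g_t(P(t)) = g_t(Q(t)) as polynomials in t, then there is a d-th root of unity ζ with P = ζ·Q. -/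
/-!
Write `g = X ^ d + h` and let `k` be the common degree of `P` and `Q`. The hypothesis says
`P ^ d - Q ^ d = h(Q) - h(P)`, and since `h` has `z`-degree `m - 1` with coefficients of `t`-degree
at most one, the right side has degree at most `(m - 1) k + 1 < (d - 1) k`. Comparing the coefficients
of `t ^ (d k)` gives `p ^ d = q ^ d` for the leading coefficients, so `ζ = p / q` is a `d`-th root of
unity and `T = ζ Q` has the same degree, leading coefficient and `d`-th power as `Q`. If `P ≠ T`, then
`P ^ d - T ^ d = (P - T) ∑ P ^ i T ^ (d - 1 - i)`, where the sum has top coefficient `d p ^ (d - 1) ≠ 0`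
in degree `(d - 1) k`; this contradicts the degree bound.
-/

open Polynomial

namespace Polynomial

variable {K : Type*}

section Semiring

variable [Semiring K]

theorem natDegree_eval_le_of_natDegree_coeff_le {h : K[X][X]} {e : ℕ}
    (hcoeff : ∀ i, (h.coeff i).natDegree ≤ e) (P : K[X]) :
    (h.eval P).natDegree ≤ h.natDegree * P.natDegree + e := by
  rw [eval_eq_sum_range]
  refine natDegree_sum_le_of_forall_le _ _ fun i hi => ?_
  have hi : i ≤ h.natDegree := Nat.lt_succ_iff.mp (Finset.mem_range.mp hi)
  calc (h.coeff i * P ^ i).natDegree ≤ e + i * P.natDegree :=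
        natDegree_mul_le.trans (add_le_add (hcoeff i) natDegree_pow_le)
    _ ≤ h.natDegree * P.natDegree + e := by rw [add_comm]; gcongr

/-- `g_t(z) - z ^ d`, with `t` the inner and `z` the outer variable. -/
noncomputable def lowerOrderPart (m : ℕ) (α β : ℕ → K) : K[X][X] :=
  C X * X ^ (m - 1) + ∑ i ∈ Finset.Icc 2 m, C (C (α i) * X + C (β i)) * X ^ (m - i)

theorem natDegree_lowerOrderPart_le (m : ℕ) (α β : ℕ → K) :
    (lowerOrderPart m α β).natDegree ≤ m - 1 :=
  natDegree_add_le_of_degree_le (natDegree_C_mul_X_pow_le _ _) <|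
    natDegree_sum_le_of_forall_le _ _ fun i hi =>
      (natDegree_C_mul_X_pow_le _ _).trans (by have := (Finset.mem_Icc.mp hi).1; omega)

theorem natDegree_coeff_lowerOrderPart_le (m : ℕ) (α β : ℕ → K) (j : ℕ) :
    ((lowerOrderPart m α β).coeff j).natDegree ≤ 1 := by
  rw [lowerOrderPart, coeff_add, finsetSum_coeff, coeff_C_mul_X_pow]
  refine natDegree_add_le_of_degree_le ?_ (natDegree_sum_le_of_forall_le _ _ fun i _ => ?_)
  · split_ifs
    exacts [natDegree_X_le, natDegree_zero.trans_le zero_le_one]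
  · rw [coeff_C_mul_X_pow]
    split_ifs
    exacts [natDegree_linear_le, natDegree_zero.trans_le zero_le_one]

theorem natDegree_eval_lowerOrderPart_le (m : ℕ) (α β : ℕ → K) (P : K[X]) :
    ((lowerOrderPart m α β).eval P).natDegree ≤ (m - 1) * P.natDegree + 1 :=
  (natDegree_eval_le_of_natDegree_coeff_le (natDegree_coeff_lowerOrderPart_le m α β) P).trans
    (by gcongr; exact natDegree_lowerOrderPart_le m α β)

end Semiring

section Field

variable [Field K] [CharZero K]

theorem le_natDegree_pow_sub_pow {P T : K[X]} (hne : P ≠ T) (hdeg : P.natDegree = T.natDegree)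
    (hlc : P.leadingCoeff = T.leadingCoeff) (d : ℕ) :
    (d - 1) * P.natDegree ≤ (P ^ d - T ^ d).natDegree := by
  obtain rfl | hd := d.eq_zero_or_pos
  · simp
  obtain rfl | hP := eq_or_ne P 0
  · simp
  have hterm : ∀ i ∈ Finset.range d,
      (P ^ i * T ^ (d - 1 - i)).coeff ((d - 1) * P.natDegree) = P.leadingCoeff ^ (d - 1) := by
    intro i hi
    have hi : i < d := Finset.mem_range.mp hi
    have hsplit : (d - 1) * P.natDegree = i * P.natDegree + (d - 1 - i) * T.natDegree := by
      rw [← hdeg, ← add_mul]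
      congr 1
      omega
    rw [hsplit, coeff_mul_add_eq_of_natDegree_le natDegree_pow_le natDegree_pow_le,
      coeff_pow_of_natDegree_le le_rfl, coeff_pow_of_natDegree_le le_rfl, ← leadingCoeff,
      ← leadingCoeff, ← hlc, ← pow_add]
    congr 1
    omega
  have htop : (∑ i ∈ Finset.range d, P ^ i * T ^ (d - 1 - i)).coeff ((d - 1) * P.natDegree) ≠ 0 := by
    rw [finsetSum_coeff, Finset.sum_congr rfl hterm, Finset.sum_const, Finset.card_range,
      nsmul_eq_mul]
    exact mul_ne_zero (Nat.cast_ne_zero.mpr hd.ne') (pow_ne_zero _ (leadingCoeff_ne_zero.mpr hP))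
  rw [← geom_sum₂_mul, natDegree_mul (fun h => htop (by rw [h, coeff_zero])) (sub_ne_zero.mpr hne)]
  exact (le_natDegree_of_ne_zero htop).trans (Nat.le_add_right _ _)

theorem exists_pow_eq_one_and_eq_C_mul_of_natDegree_pow_sub_pow_lt {P Q : K[X]} {d : ℕ}
    (hdeg : P.natDegree = Q.natDegree)
    (hlt : (P ^ d - Q ^ d).natDegree < (d - 1) * P.natDegree) :
    ∃ ζ : K, ζ ^ d = 1 ∧ P = C ζ * Q := by
  have hP : P ≠ 0 := by rintro rfl; simp at hlt
  have hq : Q.leadingCoeff ≠ 0 := leadingCoeff_ne_zero.mpr (by rintro rfl; simp [hdeg] at hlt)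
  have hlc : P.leadingCoeff ^ d = Q.leadingCoeff ^ d := by
    have htop : (P ^ d - Q ^ d).coeff (d * P.natDegree) = 0 :=
      coeff_eq_zero_of_natDegree_lt (hlt.trans_le (Nat.mul_le_mul_right _ (Nat.sub_le d 1)))
    have hQd : (Q ^ d).coeff (d * P.natDegree) = Q.leadingCoeff ^ d := by
      rw [hdeg]
      exact coeff_pow_of_natDegree_le le_rfl
    rwa [coeff_sub, coeff_pow_of_natDegree_le le_rfl, hQd, sub_eq_zero] at htop
  set ζ := P.leadingCoeff / Q.leadingCoeff
  have hζ : ζ ^ d = 1 := by rw [div_pow, hlc, div_self (pow_ne_zero _ hq)]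
  have hζ0 : ζ ≠ 0 := div_ne_zero (leadingCoeff_ne_zero.mpr hP) hq
  refine ⟨ζ, hζ, ?_⟩
  by_contra hne
  have hle := le_natDegree_pow_sub_pow hne (by rw [natDegree_C_mul hζ0, hdeg])
    (by rw [leadingCoeff_mul, leadingCoeff_C, div_mul_cancel₀ _ hq]) d
  rw [mul_pow, ← C_pow, hζ, C_1, one_mul] at hle
  exact hlt.not_ge hle

end Field

end Polynomial

theorem stmt10_general (d m : ℕ) (hm : 2 < m) (hd : m < d) (α β : ℕ → ℂ)
    (g : Polynomial (Polynomial ℂ))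
    (hg : g = X ^ d + C X * X ^ (m - 1) +
      ∑ i ∈ Finset.Icc 2 m, C (C (α i) * X + C (β i)) * X ^ (m - i))
    (n : ℕ) (hn : 2 < n) (P Q : Polynomial ℂ)
    (hP : P.natDegree = d ^ (n - 2)) (hQ : Q.natDegree = d ^ (n - 2))
    (heq : g.eval P = g.eval Q) :
    ∃ ζ : ℂ, ζ ^ d = 1 ∧ P = C ζ * Q := by
  have hk : d ≤ d ^ (n - 2) := Nat.le_self_pow (by omega) d
  have hdiff : P ^ d - Q ^ d = (lowerOrderPart m α β).eval Q - (lowerOrderPart m α β).eval P := by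
    rw [hg, add_assoc, ← lowerOrderPart, eval_add, eval_add, eval_pow, eval_pow, eval_X,
      eval_X] at heq
    linear_combination heq
  refine exists_pow_eq_one_and_eq_C_mul_of_natDegree_pow_sub_pow_lt (hP.trans hQ.symm) ?_
  calc (P ^ d - Q ^ d).natDegree ≤ (m - 1) * d ^ (n - 2) + 1 := by
        rw [hdiff]
        refine (natDegree_sub_le _ _).trans (max_le ?_ ?_)
        exacts [hQ ▸ natDegree_eval_lowerOrderPart_le m α β Q,
          hP ▸ natDegree_eval_lowerOrderPart_le m α β P]
    _ < (m - 1) * d ^ (n - 2) + d ^ (n - 2) := by omega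
    _ ≤ (d - 1) * d ^ (n - 2) := by rw [← add_one_mul]; gcongr; omega
    _ = (d - 1) * P.natDegree := by rw [hP]

theorem stmt10 (d m : ℕ) (hm : 2 < m) (hd : m < d) (α β : ℕ → ℂ) (hα : α 2 ≠ 0)
    (g : Polynomial (Polynomial ℂ))
    (hg : g = X ^ d + C X * X ^ (m - 1) +
      ∑ i ∈ Finset.Icc 2 m, C (C (α i) * X + C (β i)) * X ^ (m - i))
    (n : ℕ) (hn : 2 < n) (P Q : Polynomial ℂ)
    (hP : P.natDegree = d ^ (n - 2)) (hQ : Q.natDegree = d ^ (n - 2))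
    (heq : g.eval P = g.eval Q) :
    ∃ ζ : ℂ, ζ ^ d = 1 ∧ P = C ζ * Q :=
  stmt10_general d m hm hd α β g hg n hn P Q hP hQ heq
end

section
/- Let d > m > 2 be integers, g_t(z) = z^d + t z^(m-1) + Σ_{i=2}^m (α_i t + β_i) z^(m-i) with α_2 ≠ 0, and c_m, c_{m+1} ∈ ℂ distinct from the roots of A(z) = ∏(z - c_i). If for some integer n > 2 we have g_t^n(c_m) = g_t^n(c_{m+1}) as polynomials in t, then g_t^(n-1)(c_m) = g_t^(n-1)(c_{m+1}). -/
/-!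
Let `P`, `Q` be the `(n-1)`-st iterates at `c_m`, `c_{m+1}`. Writing `g_t = z^d + B(z) + t A(z)`,
the first iterate at `c` is `t A(c) + const`, and every further application of `g_t` multiplies
the `t`-degree by `d`, so `P` and `Q` both have degree `D = d^(n-2) ≥ 2`. From `g_t(P) = g_t(Q)`,
`P^d - Q^d = (B + tA)(Q) - (B + tA)(P)` has degree at most `(d-2)D + 1`. Hence the leading
coefficients satisfy `a^d = b^d`; for `ζ = a/b`, if `P ≠ ζQ` then
`P^d - (ζQ)^d = (P - ζQ) ∑ P^i (ζQ)^(d-1-i)` has degree at least `(d-1)D`, since the geometric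
sum has leading coefficient `d a^(d-1)`. So `P = ζQ`, and `g_t(ζQ) = g_t(Q)` becomes
`B_ζ(Q) + t A_ζ(Q) = 0` with `A_ζ(z) = A(ζz) - A(z)` and `B_ζ` likewise. The two summands have
`t`-degrees `≡ 0` and `≡ 1 (mod D)`, so `A_ζ = 0`: `ζ^k = 1` whenever `z^k` occurs in `A`. As
`z^(m-1)` and `z^(m-2)` occur in `A` (the latter because `α₂ ≠ 0`), `ζ = 1`.
-/

open Polynomial

theorem eval_polyIter_succ {R : Type*} [CommSemiring R] (p : R[X]) (q : R) (k : ℕ) :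
    (polyIter p (k + 1)).eval q = p.eval ((polyIter p k).eval q) := by
  rw [polyIter, eval_comp]

theorem le_natDegree_pow_sub_pow {K : Type*} [CommRing K] [IsDomain K] [CharZero K]
    {P Q : K[X]} (hdeg : P.natDegree = Q.natDegree) (hlc : P.leadingCoeff = Q.leadingCoeff)
    (hPQ : P ≠ Q) (d : ℕ) : (d - 1) * P.natDegree ≤ (P ^ d - Q ^ d).natDegree := by
  obtain _ | d := d
  · simp
  have hP : P ≠ 0 := by
    rintro rfl
    exact hPQ (leadingCoeff_eq_zero.mp (by rw [← hlc, leadingCoeff_zero])).symm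
  have hQ : Q ≠ 0 := by
    rintro rfl
    exact hP (leadingCoeff_eq_zero.mp (by rw [hlc, leadingCoeff_zero]))
  set G := ∑ i ∈ Finset.range (d + 1), P ^ i * Q ^ (d + 1 - 1 - i)
  have hterm : ∀ i ≤ d, (P ^ i * Q ^ (d - i)).coeff (d * P.natDegree) = P.leadingCoeff ^ d := by
    intro i hi
    have hdeg' : (P ^ i * Q ^ (d - i)).natDegree = d * P.natDegree := by
      rw [natDegree_mul (pow_ne_zero _ hP) (pow_ne_zero _ hQ), natDegree_pow, natDegree_pow,
        ← hdeg, ← add_mul, Nat.add_sub_cancel' hi]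
    rw [← hdeg', coeff_natDegree, leadingCoeff_mul, leadingCoeff_pow, leadingCoeff_pow, ← hlc,
      ← pow_add, Nat.add_sub_cancel' hi]
  have hG : G.coeff (d * P.natDegree) = (d + 1) * P.leadingCoeff ^ d := by
    rw [finsetSum_coeff, Finset.sum_congr rfl fun i hi => by
      rw [Nat.add_sub_cancel, hterm i (Finset.mem_range_succ_iff.mp hi)]]
    simp
  have hcoeff : G.coeff (d * P.natDegree) ≠ 0 := by
    rw [hG]
    exact mul_ne_zero (Nat.cast_add_one_ne_zero d) (pow_ne_zero _ (leadingCoeff_ne_zero.mpr hP))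
  have hG0 : G ≠ 0 := fun h => hcoeff (by rw [h, coeff_zero])
  rw [← geom_sum₂_mul, natDegree_mul hG0 (sub_ne_zero.mpr hPQ), Nat.add_sub_cancel]
  exact (le_natDegree_of_ne_zero hcoeff).trans (Nat.le_add_right _ _)

theorem eq_zero_of_comp_add_X_mul_comp_eq_zero {K : Type*} [CommRing K] [IsDomain K]
    {U V Q : K[X]} (hQ : 2 ≤ Q.natDegree) (h : V.comp Q + X * U.comp Q = 0) : U = 0 := by
  by_contra hU
  have hUQ : U.comp Q ≠ 0 := by
    rw [Ne, comp_eq_zero_iff]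
    rintro (h0 | ⟨-, hC⟩)
    · exact hU h0
    · rw [hC, natDegree_C] at hQ
      omega
  have hdeg := congrArg natDegree (eq_neg_of_add_eq_zero_right h)
  rw [natDegree_neg, natDegree_comp, natDegree_X_mul hUQ, natDegree_comp] at hdeg
  have hdvd : Q.natDegree ∣ 1 :=
    (Nat.dvd_add_right (dvd_mul_left _ _)).mp (hdeg ▸ dvd_mul_left _ _)
  have := Nat.le_of_dvd one_pos hdvd
  omega

/-- `z ^ d + B(z) + t * A(z)` in `K[t][z]`: the outer variable is `z`, the inner one `t`. -/
noncomputable def linearFamily {K : Type*} [CommRing K] (d : ℕ) (A B : K[X]) : K[X][X] :=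
  X ^ d + B.map C + C X * A.map C

theorem eval_linearFamily {K : Type*} [CommRing K] (d : ℕ) (A B p : K[X]) :
    (linearFamily d A B).eval p = p ^ d + (B.comp p + X * A.comp p) := by
  simp only [linearFamily, eval_add, eval_mul, eval_pow, eval_C, eval_X, eval_map, add_assoc]
  rfl

theorem natDegree_linearFamily_eval_C {K : Type*} [CommRing K] {d : ℕ} {A B : K[X]} {c : K}
    (hc : A.eval c ≠ 0) :
    ((linearFamily d A B).eval (C c)).natDegree = 1 := by
  rw [eval_linearFamily, comp_C, comp_C, ← C_pow, ← add_assoc, add_comm, mul_comm, ← C_add]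
  exact natDegree_linear hc

section linearFamily

variable {K : Type*} [CommRing K] [IsDomain K] {d : ℕ} {A B : K[X]}

theorem natDegree_comp_add_X_mul_comp_le {r : ℕ} (hA : A.natDegree ≤ r) (hB : B.natDegree ≤ r)
    (p : K[X]) : (B.comp p + X * A.comp p).natDegree ≤ r * p.natDegree + 1 := by
  have hAp : (A.comp p).natDegree ≤ r * p.natDegree := by
    rw [natDegree_comp]; exact Nat.mul_le_mul_right _ hA
  have hBp : (B.comp p).natDegree ≤ r * p.natDegree := by
    rw [natDegree_comp]; exact Nat.mul_le_mul_right _ hB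
  refine natDegree_add_le_of_degree_le (hBp.trans (Nat.le_succ _)) ?_
  exact natDegree_mul_le.trans (by rw [natDegree_X]; omega)

theorem natDegree_linearFamily_eval (hd : 2 ≤ d) (hA : A.natDegree ≤ d - 2)
    (hB : B.natDegree ≤ d - 2) {p : K[X]} (hp : 1 ≤ p.natDegree) :
    ((linearFamily d A B).eval p).natDegree = d * p.natDegree := by
  have hlt : (d - 2) * p.natDegree + 1 < d * p.natDegree := by
    obtain ⟨e, rfl⟩ := Nat.exists_eq_add_of_le hd
    rw [Nat.add_sub_cancel_left, add_mul]
    omega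
  have hlower : (B.comp p + X * A.comp p).natDegree < (p ^ d).natDegree := by
    rw [natDegree_pow]
    exact (natDegree_comp_add_X_mul_comp_le hA hB p).trans_lt hlt
  rw [eval_linearFamily, natDegree_add_eq_left_of_natDegree_lt hlower, natDegree_pow]

theorem natDegree_polyIter_linearFamily_eval_C (hd : 2 ≤ d) (hA : A.natDegree ≤ d - 2)
    (hB : B.natDegree ≤ d - 2) {c : K} (hc : A.eval c ≠ 0) (k : ℕ) :
    ((polyIter (linearFamily d A B) (k + 1)).eval (C c)).natDegree = d ^ k := by
  induction k with
  | zero => rw [eval_polyIter_succ, polyIter, eval_X, natDegree_linearFamily_eval_C hc, pow_zero]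
  | succ k ih =>
    have hpos : 1 ≤ d ^ k := Nat.one_le_pow _ _ (by omega)
    rw [eval_polyIter_succ, natDegree_linearFamily_eval hd hA hB (ih ▸ hpos), ih, pow_succ,
      mul_comm]

theorem pow_eq_one_of_linearFamily_eval_C_mul_eq {ζ : K} (hζ : ζ ^ d = 1) {Q : K[X]}
    (hQ : 2 ≤ Q.natDegree)
    (h : (linearFamily d A B).eval (C ζ * Q) = (linearFamily d A B).eval Q) {k : ℕ}
    (hk : A.coeff k ≠ 0) : ζ ^ k = 1 := by
  have hsum : (B.comp (C ζ * X) - B).comp Q + X * (A.comp (C ζ * X) - A).comp Q = 0 := by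
    rw [eval_linearFamily, eval_linearFamily, mul_pow, ← C_pow, hζ, C_1, one_mul,
      add_right_inj] at h
    simp only [sub_comp, comp_assoc, mul_comp, C_comp, X_comp]
    linear_combination h
  have hAζ := congrArg (coeff · k)
    (sub_eq_zero.mp (eq_zero_of_comp_add_X_mul_comp_eq_zero hQ hsum))
  simp only [comp_C_mul_X_coeff] at hAζ
  exact mul_left_cancel₀ hk (hAζ.trans (mul_one _).symm)

end linearFamily

theorem exists_eq_C_mul_of_linearFamily_eval_eq {K : Type*} [Field K] [CharZero K] {d : ℕ}
    {A B : K[X]} (hd : 2 ≤ d) (hA : A.natDegree ≤ d - 2) (hB : B.natDegree ≤ d - 2)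
    {P Q : K[X]} (hdeg : P.natDegree = Q.natDegree) (hQ : 2 ≤ Q.natDegree)
    (h : (linearFamily d A B).eval P = (linearFamily d A B).eval Q) :
    ∃ ζ : K, ζ ^ d = 1 ∧ P = C ζ * Q := by
  set D := Q.natDegree
  have hsub : P ^ d - Q ^ d = (B.comp Q + X * A.comp Q) - (B.comp P + X * A.comp P) := by
    rw [eval_linearFamily, eval_linearFamily] at h
    linear_combination h
  have hbound : (P ^ d - Q ^ d).natDegree ≤ (d - 2) * D + 1 := by
    rw [hsub]
    refine (natDegree_sub_le _ _).trans (max_le ?_ ?_)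
    · exact natDegree_comp_add_X_mul_comp_le hA hB Q
    · rw [← hdeg]; exact natDegree_comp_add_X_mul_comp_le hA hB P
  have hQ0 : Q ≠ 0 := ne_zero_of_natDegree_gt hQ
  have hb : Q.leadingCoeff ≠ 0 := leadingCoeff_ne_zero.mpr hQ0
  have hdD : d * D = (d - 2) * D + 2 * D := by rw [← add_mul]; congr 1; omega
  have hlc : P.leadingCoeff ^ d = Q.leadingCoeff ^ d := by
    have : (P ^ d - Q ^ d).coeff (d * D) = 0 :=
      coeff_eq_zero_of_natDegree_lt (hbound.trans_lt (by omega))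
    rwa [coeff_sub, ← hdeg, coeff_pow_mul_natDegree, hdeg, coeff_pow_mul_natDegree,
      sub_eq_zero] at this
  set ζ := P.leadingCoeff / Q.leadingCoeff
  have hζd : ζ ^ d = 1 := by rw [div_pow, hlc, div_self (pow_ne_zero _ hb)]
  have hζ : ζ ≠ 0 := by
    rintro hζ
    rw [hζ, zero_pow (by omega)] at hζd
    exact zero_ne_one hζd
  refine ⟨ζ, hζd, ?_⟩
  by_contra hne
  have hlow := le_natDegree_pow_sub_pow (hdeg.trans (natDegree_C_mul hζ).symm)
    (by rw [leadingCoeff_C_mul_of_isUnit hζ.isUnit, div_mul_cancel₀ _ hb]) hne d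
  rw [mul_pow, ← C_pow, hζd, C_1, one_mul, hdeg] at hlow
  have hd1D : (d - 1) * D = (d - 2) * D + D := by rw [← add_one_mul]; congr 1; omega
  omega

theorem eq_of_linearFamily_eval_eq {K : Type*} [Field K] [CharZero K] {d j : ℕ} {A B : K[X]}
    (hd : 2 ≤ d) (hA : A.natDegree ≤ d - 2) (hB : B.natDegree ≤ d - 2) (hj : A.coeff j ≠ 0)
    (hj1 : A.coeff (j + 1) ≠ 0) {P Q : K[X]} (hdeg : P.natDegree = Q.natDegree)
    (hQ : 2 ≤ Q.natDegree) (h : (linearFamily d A B).eval P = (linearFamily d A B).eval Q) :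
    P = Q := by
  obtain ⟨ζ, hζd, rfl⟩ := exists_eq_C_mul_of_linearFamily_eval_eq hd hA hB hdeg hQ h
  have hζj := pow_eq_one_of_linearFamily_eval_C_mul_eq hζd hQ h hj
  have hζj1 := pow_eq_one_of_linearFamily_eval_C_mul_eq hζd hQ h hj1
  rw [pow_succ, hζj, one_mul] at hζj1
  rw [hζj1, C_1, one_mul]

theorem natDegree_sum_Icc_C_mul_X_pow_sub_le {K : Type*} [Semiring K] (γ : ℕ → K) (m : ℕ) :
    (∑ i ∈ Finset.Icc 2 m, C (γ i) * X ^ (m - i)).natDegree ≤ m - 2 :=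
  natDegree_sum_le_of_forall_le _ _ fun i hi =>
    (natDegree_C_mul_X_pow_le _ _).trans (by rw [Finset.mem_Icc] at hi; omega)

theorem coeff_sum_Icc_C_mul_X_pow_sub {K : Type*} [Semiring K] (γ : ℕ → K) {j m : ℕ}
    (hj : j ≤ m) :
    (∑ i ∈ Finset.Icc 2 m, C (γ i) * X ^ (m - i)).coeff (m - j) =
      if 2 ≤ j then γ j else 0 := by
  rw [finsetSum_coeff]
  simp only [coeff_C_mul_X_pow]
  split_ifs with h2
  · rw [Finset.sum_eq_single_of_mem j (Finset.mem_Icc.mpr ⟨h2, hj⟩)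
      fun i hi hij => if_neg (by rw [Finset.mem_Icc] at hi; omega), if_pos rfl]
  · exact Finset.sum_eq_zero fun i hi => if_neg (by rw [Finset.mem_Icc] at hi; omega)

theorem stmt12 (d m : ℕ) (hm : 2 < m) (hd : m < d) (α β : ℕ → ℂ) (hα : α 2 ≠ 0)
    (g : Polynomial (Polynomial ℂ))
    (hg : g = X ^ d + C X * X ^ (m - 1) +
      ∑ i ∈ Finset.Icc 2 m, C (C (α i) * X + C (β i)) * X ^ (m - i))
    (A : Polynomial ℂ)
    (hA : A = X ^ (m - 1) + ∑ i ∈ Finset.Icc 2 m, C (α i) * X ^ (m - i))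
    (cm cm1 : ℂ) (hcm : A.eval cm ≠ 0) (hcm1 : A.eval cm1 ≠ 0)
    (n : ℕ) (hn : 2 < n)
    (heq : (polyIter g n).eval (C cm) = (polyIter g n).eval (C cm1)) :
    (polyIter g (n - 1)).eval (C cm) = (polyIter g (n - 1)).eval (C cm1) := by
  set B : ℂ[X] := ∑ i ∈ Finset.Icc 2 m, C (β i) * X ^ (m - i)
  have hgAB : g = linearFamily d A B := by
    simp only [hg, hA, B, linearFamily, Polynomial.map_add, Polynomial.map_sum,
      Polynomial.map_mul, Polynomial.map_pow, map_X, map_C, C_add, C_mul, add_mul,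
      Finset.sum_add_distrib, mul_add, Finset.mul_sum]
    ring_nf
  have hAdeg : A.natDegree ≤ d - 2 := hA ▸ natDegree_add_le_of_degree_le
    ((natDegree_X_pow_le _).trans (by omega))
    ((natDegree_sum_Icc_C_mul_X_pow_sub_le α m).trans (by omega))
  have hBdeg : B.natDegree ≤ d - 2 := (natDegree_sum_Icc_C_mul_X_pow_sub_le β m).trans (by omega)
  have hA1 : A.coeff (m - 2 + 1) = 1 := by
    rw [show m - 2 + 1 = m - 1 by omega, hA, coeff_add, coeff_X_pow,
      coeff_sum_Icc_C_mul_X_pow_sub α (by omega)]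
    simp
  have hA2 : A.coeff (m - 2) = α 2 := by
    rw [hA, coeff_add, coeff_X_pow, coeff_sum_Icc_C_mul_X_pow_sub α (by omega),
      if_neg (by omega)]
    simp
  obtain ⟨k, rfl⟩ : ∃ k, n = k + 2 := ⟨n - 2, by omega⟩
  rw [show k + 2 - 1 = k + 1 by omega]
  rw [eval_polyIter_succ, eval_polyIter_succ (k := k + 1), hgAB] at heq
  rw [hgAB]
  have hdeg c (hc : A.eval c ≠ 0) :=
    natDegree_polyIter_linearFamily_eval_C (by omega) hAdeg hBdeg hc k
  refine eq_of_linearFamily_eval_eq (by omega) hAdeg hBdeg (hA2 ▸ hα) (hA1 ▸ one_ne_zero)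
    ((hdeg cm hcm).trans (hdeg cm1 hcm1).symm) ?_ heq
  rw [hdeg cm1 hcm1]
  exact (show 2 ≤ d by omega).trans (Nat.le_self_pow (by omega) d)
end

section
/- Let d ≥ 2 and let u(t), v(t) ∈ ℂ[t] be polynomials of the same degree D ≥ 1 such that u^d - v^d has degree strictly less than D(d-1). Then there exists a d-th root of unity ζ with u = ζ·v. -/
/-!
Over a field containing a primitive `d`-th root of unity, `u ^ d - v ^ d` is the product of the
`d` polynomials `u - c • v` with `c ^ d = 1`. If `u` and `v` both have degree `D`, the leading
coefficient of `u - c • v` cancels for at most one `c`, so unless some factor vanishes the product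
has degree at least `D * (d - 1)`.
-/

open Polynomial Finset

namespace Polynomial

theorem natDegree_sub_C_mul_eq_of_leadingCoeff_ne {R : Type*} [Ring R] {u v : R[X]} {c : R}
    (huv : u.natDegree = v.natDegree) (hc : u.leadingCoeff ≠ c * v.leadingCoeff) :
    (u - C c * v).natDegree = u.natDegree := by
  refine le_antisymm ((natDegree_sub_le_of_le le_rfl (natDegree_C_mul_le c v)).trans
    (by rw [huv, max_self])) ?_
  refine le_natDegree_of_ne_zero ?_
  rwa [coeff_sub, coeff_C_mul, huv, ← leadingCoeff, ← huv, ← leadingCoeff, sub_ne_zero]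

variable {K : Type*} [Field K]

theorem mul_card_sub_one_le_natDegree_prod_sub_C_mul {u v : K[X]} (s : Finset K)
    (huv : u.natDegree = v.natDegree) (hne : ∀ c ∈ s, u - C c * v ≠ 0) :
    v.natDegree * (#s - 1) ≤ (∏ c ∈ s, (u - C c * v)).natDegree := by
  classical
  rcases eq_or_ne v 0 with rfl | hv
  · simp
  have hdeg : ∀ c ∈ s.erase (u.leadingCoeff / v.leadingCoeff),
      (u - C c * v).natDegree = v.natDegree := fun c hc ↦ by
    refine huv ▸ natDegree_sub_C_mul_eq_of_leadingCoeff_ne huv fun h ↦ (mem_erase.mp hc).1 ?_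
    rw [h, mul_div_cancel_right₀ c (leadingCoeff_ne_zero.mpr hv)]
  calc v.natDegree * (#s - 1)
      ≤ v.natDegree * #(s.erase (u.leadingCoeff / v.leadingCoeff)) := by
        gcongr; exact pred_card_le_card_erase
    _ = ∑ c ∈ s.erase (u.leadingCoeff / v.leadingCoeff), (u - C c * v).natDegree := by
        rw [sum_congr rfl hdeg, sum_const, smul_eq_mul, mul_comm]
    _ ≤ ∑ c ∈ s, (u - C c * v).natDegree := sum_le_sum_of_subset (erase_subset _ _)
    _ = (∏ c ∈ s, (u - C c * v)).natDegree := (natDegree_prod s _ hne).symm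

theorem _root_.IsPrimitiveRoot.pow_sub_pow_eq_prod_sub_C_mul {ζ : K} {n : ℕ} (hn : 0 < n)
    (hζ : IsPrimitiveRoot ζ n) (u v : K[X]) :
    u ^ n - v ^ n = ∏ c ∈ nthRootsFinset n (1 : K), (u - C c * v) := by
  classical
  have hζC : IsPrimitiveRoot (C ζ) n := hζ.map_of_injective C_injective
  have himage : (nthRootsFinset n (1 : K)).image C = nthRootsFinset n (1 : K[X]) := by
    refine eq_of_subset_of_card_le (fun p hp ↦ ?_) ?_
    · obtain ⟨c, hc, rfl⟩ := mem_image.mp hp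
      exact map_mem_nthRootsFinset_one hc C
    · rw [card_image_of_injective _ C_injective, hζ.card_nthRootsFinset,
        hζC.card_nthRootsFinset]
  rw [hζC.pow_sub_pow_eq_prod_sub_mul u v hn, ← himage, prod_image C_injective.injOn]

theorem exists_pow_eq_one_and_eq_C_mul_of_degree_pow_sub_pow_lt {ζ : K} {n : ℕ} (hn : 0 < n)
    (hζ : IsPrimitiveRoot ζ n) {u v : K[X]} (huv : u.natDegree = v.natDegree)
    (hdeg : (u ^ n - v ^ n).degree < ((v.natDegree * (n - 1) : ℕ) : WithBot ℕ)) :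
    ∃ c : K, c ^ n = 1 ∧ u = C c * v := by
  by_contra! hne
  have hfactor : ∀ c ∈ nthRootsFinset n (1 : K), u - C c * v ≠ 0 := fun c hc ↦
    sub_ne_zero.mpr (hne c ((mem_nthRootsFinset hn 1).mp hc))
  have hbound := mul_card_sub_one_le_natDegree_prod_sub_C_mul _ huv hfactor
  rw [← hζ.pow_sub_pow_eq_prod_sub_C_mul hn, hζ.card_nthRootsFinset] at hbound
  have hne_zero : u ^ n - v ^ n ≠ 0 := by
    rw [hζ.pow_sub_pow_eq_prod_sub_C_mul hn]
    exact prod_ne_zero_iff.mpr hfactor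
  rw [degree_eq_natDegree hne_zero, Nat.cast_lt] at hdeg
  omega

end Polynomial

theorem stmt18_general (d D : ℕ) (hd : 2 ≤ d)
    (u v : Polynomial ℂ) (hu : u.natDegree = D) (hv : v.natDegree = D)
    (hdeg : (u ^ d - v ^ d).degree < ((D * (d - 1) : ℕ) : WithBot ℕ)) :
    ∃ ζ : ℂ, ζ ^ d = 1 ∧ u = C ζ * v := by
  have hd0 : 0 < d := by omega
  subst hv
  exact exists_pow_eq_one_and_eq_C_mul_of_degree_pow_sub_pow_lt hd0
    (Complex.isPrimitiveRoot_exp d hd0.ne') hu hdeg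

theorem stmt18 (d D : ℕ) (hd : 2 ≤ d) (hD : 1 ≤ D)
    (u v : Polynomial ℂ) (hu : u.natDegree = D) (hv : v.natDegree = D)
    (hdeg : (u ^ d - v ^ d).degree < ((D * (d - 1) : ℕ) : WithBot ℕ)) :
    ∃ ζ : ℂ, ζ ^ d = 1 ∧ u = C ζ * v :=
  stmt18_general d D hd u v hu hv hdeg
end
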